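/- arXiv:1807.00616 — 3 statements merged into one kernel-verified Lean document; each statement's English description precedes it below -/
import Mathlib

section
/- Let X ⊆ ℕ be a finite set which is ω^{n+6}-large and exp-sparse. Then X admits an (ω^n, ω)-grouping; that is, for every colouring P : [X]^2 → 2 there exists an (ω^n, ω)-grouping for P. -/
/- Ordinals `α < ω^ω` are represented in Cantor normal form as the list of their
exponents in nonincreasing order: `[n₀, n₁, …, n_{k-1}]` codes `ω^{n₀} + ⋯ + ω^{n_{k-1}}`,
and such a list is a valid Cantor normal form when it is sorted w.r.t. `≥`. -/

/-- The Ketonen–Solovay operation `α[m]`: `0[m] = 0`; `α[m] = β` if `α = β + 1`;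
`α[m] = β + ω^(n-1)·m` if `α = β + ω^n` with `n ≥ 1`. -/
def KSstep : List ℕ → ℕ → List ℕ
  | [], _ => []
  | [0], _ => []
  | [Nat.succ n], m => List.replicate m n
  | a :: b :: l, m => a :: KSstep (b :: l) m

/-- A finite set `X = {x₀ < ⋯ < x_{ℓ-1}} ⊆ ℕ` is `α`-large if `α[x₀][x₁]⋯[x_{ℓ-1}| = 0`. -/
def IsLarge (α : List ℕ) (X : Finset ℕ) : Prop :=
  (X.sort (· ≤ ·)).foldl KSstep α = []

/-- A finite set `X ⊆ ℕ` (with `min X ≥ 3`) is exp-sparse if for all `x, y ∈ X`,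
`x < y` implies `4^x < y`. -/
def ExpSparse (X : Finset ℕ) : Prop :=
  (∀ x ∈ X, 3 ≤ x) ∧ ∀ x ∈ X, ∀ y ∈ X, x < y → 4 ^ x < y

/-- A finite set `X ⊆ ℕ` is `α`-sparse if for all `x, y ∈ X` with `x < y`,
the interval `(x, y]` is `α`-large. -/
def SparseFor (α : List ℕ) (X : Finset ℕ) : Prop :=
  ∀ x ∈ X, ∀ y ∈ X, x < y → IsLarge α (Finset.Ioc x y)

/-- `Fs = ⟨F_i : i < ℓ⟩` is an `(α, β)`-grouping for the colouring `P` on `X`: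
the `F_i` are subsets of `X`, each `F_i` is (nonempty and) `α`-large, the groups are
arranged in increasing order, the set `{max F_i : i < ℓ}` is `β`-large, and the colour
of a pair of elements from two distinct groups depends only on the groups. -/
def IsGrouping (α β : List ℕ) (X : Finset ℕ) (P : ℕ → ℕ → Fin 2)
    (Fs : List (Finset ℕ)) : Prop :=
  (∀ F ∈ Fs, F ⊆ X ∧ F.Nonempty ∧ IsLarge α F) ∧
  (∀ i j, i < j → j < Fs.length →
    ∀ x ∈ Fs.getD i ∅, ∀ y ∈ Fs.getD j ∅, x < y) ∧
  IsLarge β (Fs.map fun F => F.sup id).toFinset ∧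
  (∀ i j, i < j → j < Fs.length →
    ∀ x ∈ Fs.getD i ∅, ∀ x' ∈ Fs.getD i ∅, ∀ y ∈ Fs.getD j ∅, ∀ y' ∈ Fs.getD j ∅,
      P x y = P x' y')

/-- `X` admits an `(α, β)`-grouping if every colouring `P : [X]² → 2` has an
`(α, β)`-grouping. -/
def AdmitsGrouping (α β : List ℕ) (X : Finset ℕ) : Prop :=
  ∀ P : ℕ → ℕ → Fin 2, ∃ Fs : List (Finset ℕ), IsGrouping α β X P Fs

namespace KSG

abbrev Lg (α l : List ℕ) : Prop := l.foldl KSstep α = []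

@[simp] lemma KSstep_nil (m : ℕ) : KSstep [] m = [] := rfl
@[simp] lemma KSstep_zero (m : ℕ) : KSstep [0] m = [] := rfl
lemma KSstep_succ (n m : ℕ) : KSstep [n+1] m = List.replicate m n := rfl
lemma KSstep_cons (a b : ℕ) (l : List ℕ) (m : ℕ) :
    KSstep (a :: b :: l) m = a :: KSstep (b :: l) m := by
  match a with
  | 0 => rfl
  | Nat.succ _ => rfl

lemma KSstep_append (L₁ L₂ : List ℕ) (h : L₂ ≠ []) (m : ℕ) :
    KSstep (L₁ ++ L₂) m = L₁ ++ KSstep L₂ m := by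
  induction L₁ with
  | nil => simp
  | cons a L₁ ih =>
      obtain ⟨b, l, hbl⟩ : ∃ b l, L₁ ++ L₂ = b :: l := by
        cases hL : L₁ ++ L₂ with
        | nil => exact absurd (List.append_eq_nil_iff.mp hL).2 h
        | cons b l => exact ⟨b, l, rfl⟩
      rw [List.cons_append, hbl, KSstep_cons, ← hbl, ih, List.cons_append]

@[simp] lemma foldl_nil_state (l : List ℕ) : l.foldl KSstep [] = [] := by
  induction l with
  | nil => rfl
  | cons x l ih => simpa using ih

lemma Lg_nil_iff (α : List ℕ) : Lg α [] ↔ α = [] := by simp [Lg]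

lemma Lg_cons (α : List ℕ) (x : ℕ) (l : List ℕ) :
    Lg α (x :: l) ↔ Lg (KSstep α x) l := Iff.rfl

/-- splitting lemma: processing `L₁ ++ L₂` splits the fuel list. -/
lemma Lg_append_split {L₁ L₂ xs : List ℕ} (h : Lg (L₁ ++ L₂) xs) :
    ∃ ys zs, xs = ys ++ zs ∧ Lg L₂ ys ∧ Lg L₁ zs := by
  induction xs generalizing L₂ with
  | nil =>
      rcases List.append_eq_nil_iff.mp ((Lg_nil_iff _).mp h) with ⟨h1, h2⟩
      exact ⟨[], [], rfl, (Lg_nil_iff _).mpr h2, (Lg_nil_iff _).mpr h1⟩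
  | cons x xs ih =>
      by_cases hL : L₂ = []
      · subst hL
        refine ⟨[], x :: xs, rfl, (Lg_nil_iff _).mpr rfl, ?_⟩
        simpa using h
      · have h' : Lg (L₁ ++ KSstep L₂ x) xs := by
          have := KSstep_append L₁ L₂ hL x
          simpa [Lg, List.foldl_cons, this] using h
        obtain ⟨ys, zs, hxs, hy, hz⟩ := ih h'
        exact ⟨x :: ys, zs, by simp [hxs], hy, hz⟩

def MinLg (α l : List ℕ) : Prop :=
  Lg α l ∧ ∀ k < l.length, (l.take k).foldl KSstep α ≠ []

lemma chop {α l : List ℕ} (h : Lg α l) : ∃ w, w.Sublist l ∧ MinLg α w := by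
  induction l generalizing α with
  | nil => exact ⟨[], List.Sublist.refl _, h, by simp⟩
  | cons x l ih =>
      by_cases hα : α = []
      · exact ⟨[], by simp, by simp [MinLg, Lg, hα], by simp [hα]⟩
      · obtain ⟨w, hw, hmin⟩ := ih (h : Lg (KSstep α x) l)
        refine ⟨x :: w, hw.cons_cons x, hmin.1, ?_⟩
        intro k hk
        cases k with
        | zero => simpa using hα
        | succ k =>
            simpa [List.take_succ_cons] using hmin.2 k (by simpa using hk)

lemma comp {L₁ L₂ ys zs : List ℕ} (hy : MinLg L₂ ys) (hz : Lg L₁ zs) :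
    Lg (L₁ ++ L₂) (ys ++ zs) := by
  induction ys generalizing L₂ with
  | nil =>
      have : L₂ = [] := (Lg_nil_iff _).mp hy.1
      simpa [this] using hz
  | cons y ys ih =>
      have hL₂ : L₂ ≠ [] := by simpa using hy.2 0 (by simp)
      have : Lg (L₁ ++ KSstep L₂ y) (ys ++ zs) := by
        refine ih ⟨hy.1, ?_⟩ 
        intro k hk
        simpa [List.take_succ_cons] using hy.2 (k+1) (by simpa using hk)
      simpa [Lg, List.cons_append, List.foldl_cons, KSstep_append L₁ L₂ hL₂ y] using this

lemma Lg_ne_nil {α l : List ℕ} (h : Lg α l) (hα : α ≠ []) : l ≠ [] := by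
  rintro rfl; exact hα ((Lg_nil_iff _).mp h)

/-- `replicate m 0` fuel just counts elements. -/
lemma foldl_replicate_zero (l : List ℕ) (m : ℕ) :
    l.foldl KSstep (List.replicate m 0) = List.replicate (m - l.length) 0 := by
  induction l generalizing m with
  | nil => simp
  | cons x l ih =>
      cases m with
      | zero => simp
      | succ m =>
          have : KSstep (List.replicate (m+1) 0) x = List.replicate m 0 := by
            rw [List.replicate_succ' ]
            cases m with
            | zero => simp
            | succ m =>
                rw [KSstep_append _ [0] (by simp) x]
                simp
          have h2 : m + 1 - (l.length + 1) = m - l.length := by omega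
          simp only [Lg, List.foldl_cons, this, ih, List.length_cons, h2]

lemma Lg_replicate_zero_iff (l : List ℕ) (m : ℕ) :
    Lg (List.replicate m 0) l ↔ m ≤ l.length := by
  rw [Lg, foldl_replicate_zero]
  constructor
  · intro h
    by_contra hc
    have : m - l.length ≠ 0 := by omega
    simp [List.replicate_eq_nil_iff] at h
    omega
  · intro h; simp [Nat.sub_eq_zero_of_le h]

lemma length_KSstep : ∀ (α : List ℕ) (x : ℕ), α.length - 1 ≤ (KSstep α x).length
  | [], _ => by simp
  | [0], _ => by simp
  | [Nat.succ n], x => by simp [KSstep_succ]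
  | a :: b :: l, x => by
      have := length_KSstep (b :: l) x
      rw [KSstep_cons]
      simp only [List.length_cons] at this ⊢
      omega

lemma length_le_of_Lg {α l : List ℕ} (h : Lg α l) : α.length ≤ l.length := by
  induction l generalizing α with
  | nil => simp [(Lg_nil_iff _).mp h]
  | cons x l ih =>
      have hlen := length_KSstep α x
      have := ih (h : Lg (KSstep α x) l)
      simp only [List.length_cons]
      omega

end KSG

namespace KSG

def CoLg (α l : List ℕ) : Prop := ∃ w, w.Sublist l ∧ Lg α w

def SpL (l : List ℕ) : Prop := l.Pairwise (fun x y => 4^x < y) ∧ ∀ x ∈ l, 3 ≤ x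

lemma Lg.coLg {α l : List ℕ} (h : Lg α l) : CoLg α l := ⟨l, List.Sublist.refl l, h⟩

lemma CoLg.sub {α l l' : List ℕ} (hs : l.Sublist l') (h : CoLg α l) : CoLg α l' := by
  obtain ⟨w, hw, hl⟩ := h; exact ⟨w, hw.trans hs, hl⟩

lemma SpL.sublist {l w : List ℕ} (h : SpL l) (hs : w.Sublist l) : SpL w :=
  ⟨h.1.sublist hs, fun x hx => h.2 x (hs.subset hx)⟩

lemma lt_four_pow (m : ℕ) : m < 4^m := Nat.lt_pow_self (by norm_num)

lemma four_mul_le {m : ℕ} (h : 2 ≤ m) : 4*m ≤ 4^m := by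
  induction m with
  | zero => omega
  | succ m ih =>
      rcases Nat.lt_or_ge m 2 with hm | hm
      · interval_cases m <;> norm_num
      · have := ih hm
        have h4 : 4^(m+1) = 4 * 4^m := by ring
        have : 4 ≤ 4^m := by
          calc 4 ≤ 4*m := by omega
          _ ≤ 4^m := this
        omega

lemma SpL.sorted {l : List ℕ} (h : SpL l) : l.Pairwise (· < ·) := by
  refine h.1.imp ?_
  intro a b hab
  exact lt_of_le_of_lt (Nat.le_of_lt (lt_four_pow a)) hab

lemma CoLg_weaken {K m M : ℕ} {l : List ℕ} (h : CoLg (List.replicate M K) l) (hm : m ≤ M) :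
    CoLg (List.replicate m K) l := by
  obtain ⟨w, hw, hl⟩ := h
  have : Lg (List.replicate (M-m) K ++ List.replicate m K) w := by
    rwa [← List.replicate_add, Nat.sub_add_cancel hm]
  obtain ⟨ys, zs, hsplit, hy, _⟩ := Lg_append_split this
  exact ⟨ys, (hsplit ▸ (List.sublist_append_left ys zs) : ys.Sublist w).trans hw, hy⟩

lemma CoLg_combine {α β : List ℕ} {l₁ l₂ : List ℕ} (h₁ : CoLg β l₁) (h₂ : CoLg α l₂) :
    CoLg (α ++ β) (l₁ ++ l₂) := by
  obtain ⟨w₁, hs₁, hl₁⟩ := h₁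
  obtain ⟨w₁', hs₁', hmin⟩ := chop hl₁
  obtain ⟨w₂, hs₂, hl₂⟩ := h₂
  exact ⟨w₁' ++ w₂, (hs₁'.trans hs₁).append hs₂, comp hmin hl₂⟩

lemma blocksPairs {K c : ℕ} {S : List ℕ} (h : Lg (List.replicate (2*c) K) S) :
    ∃ Ds : List (List ℕ), Ds.length = c ∧
      (∀ D ∈ Ds, ∃ C C', D = C ++ C' ∧ Lg [K] C ∧ Lg [K] C') ∧
      Ds.flatten.Sublist S := by
  induction c generalizing S with
  | zero => exact ⟨[], rfl, by simp, by simp⟩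
  | succ c ih =>
      have h2 : Lg (List.replicate (2*c) K ++ List.replicate 2 K) S := by
        rwa [← List.replicate_add, show 2*c+2 = 2*(c+1) by ring]
      obtain ⟨ys, zs, rfl, hy, hz⟩ := Lg_append_split h2
      have hy2 : Lg ([K] ++ [K]) ys := by
        simpa [List.replicate] using hy
      obtain ⟨C, C', rfl, hC, hC'⟩ := Lg_append_split hy2
      obtain ⟨Ds, hlen, hprops, hsub⟩ := ih hz
      refine ⟨(C ++ C') :: Ds, by simp [hlen], ?_, ?_⟩
      · rintro D hD
        rcases List.mem_cons.mp hD with hD | hD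
        · exact ⟨C, C', hD, hC, hC'⟩
        · exact hprops D hD
      · simpa using (List.Sublist.append (List.Sublist.refl (C++C')) hsub)

lemma filter_length_split (l : List ℕ) (f : ℕ → Bool) :
    (l.filter f).length + (l.filter (fun x => !f x)).length = l.length := by
  induction l with
  | nil => simp
  | cons x l ih => by_cases h : f x <;> simp [List.filter_cons, h, ← ih] <;> omega

lemma head_min {b : ℕ} {rest : List ℕ} (h : (b :: rest).Pairwise (· < ·)) :
    ∀ y ∈ b :: rest, b ≤ y := by
  intro y hy
  rcases hy with _ | hy
  · exact le_refl _
  · exact le_of_lt ((List.pairwise_cons.mp h).1 y (by assumption))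

end KSG

namespace KSG

abbrev HIH (K : ℕ) : Prop :=
  ∀ (p q : ℕ) (Y : List ℕ) (f : ℕ → Bool), SpL Y →
    CoLg (List.replicate (2*(p+q)) K) Y →
    CoLg (List.replicate p K) (Y.filter f) ∨
      CoLg (List.replicate q K) (Y.filter (fun x => !f x))

lemma PLaux (K : ℕ) (IH : HIH K) (c : ℕ) (Ct C' : List ℕ) (f : ℕ → Bool)
    (hsp : SpL ((c :: Ct) ++ C'))
    (hC : Lg [K+1] (c :: Ct)) (hC' : Lg [K+1] C') (hfc : f c = true) :
    CoLg [K+1] (((c :: Ct) ++ C').filter f) ∨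
      CoLg [K+1] (((c :: Ct) ++ C').filter (fun x => !f x)) := by
  obtain ⟨c', I', rfl⟩ : ∃ c' I', C' = c' :: I' := by
    cases C' with
    | nil => exact absurd rfl (Lg_ne_nil hC' (by simp))
    | cons a b => exact ⟨a, b, rfl⟩
  have hI' : Lg (List.replicate c' K) I' := by
    simpa [Lg, List.foldl_cons, KSstep_succ] using hC'
  cases hDf : ((c :: Ct) ++ c' :: I').filter (fun x => !f x) with
  | nil =>
      left
      have hall : ∀ x ∈ (c :: Ct) ++ c' :: I', f x = true := by
        intro x hx
        have := List.filter_eq_nil_iff.mp hDf x hx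
        simpa using this
      refine ⟨c :: Ct, ?_, hC⟩
      rw [List.filter_eq_self.mpr hall]
      exact List.sublist_append_left _ _
  | cons b rest =>
      have hbD : b ∈ (c :: Ct) ++ c' :: I' ∧ (!f b) = true := by
        have : b ∈ ((c :: Ct) ++ c' :: I').filter (fun x => !f x) := by
          rw [hDf]; exact List.mem_cons_self
        exact List.mem_filter.mp this
      have hfb : f b = false := by simpa using hbD.2
      have hIsub : I'.Sublist ((c :: Ct) ++ c' :: I') :=
        ((List.sublist_cons_self c' I').trans (List.sublist_append_right _ _))
      by_cases hbC : b ∈ c :: Ct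
      · have h3 : ∀ x ∈ (c :: Ct) ++ c' :: I', 3 ≤ x := hsp.2
        have hcross : ∀ x ∈ c :: Ct, 4^x < c' :=
          fun x hx => (List.pairwise_append.mp hsp.1).2.2 x hx c' (by simp)
        have hcb : 2*(c + b) ≤ c' := by
          rcases Nat.le_total c b with h | h
          · have h1 : 4*b ≤ 4^b :=
              four_mul_le (by have := h3 b (List.mem_append.mpr (Or.inl hbC)); omega)
            have h2 := hcross b hbC
            omega
          · have h1 : 4*c ≤ 4^c :=
              four_mul_le (by have := h3 c (by simp); omega)
            have h2 := hcross c (by simp)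
            omega
        have hco : CoLg (List.replicate (2*(c+b)) K) I' := CoLg_weaken hI'.coLg hcb
        have hspI' : SpL I' := hsp.sublist hIsub
        rcases IH c b I' f hspI' hco with hA | hB
        · left
          obtain ⟨w, hw, hlw⟩ := hA
          refine ⟨c :: w, ?_, ?_⟩
          · have hDfil : ((c :: Ct) ++ c' :: I').filter f
                = c :: ((Ct ++ c' :: I').filter f) := by
              simp [List.filter_cons, hfc]
            rw [hDfil]
            refine List.Sublist.cons₂ c ?_
            refine (hw.trans (List.Sublist.filter f ?_))
            exact (List.sublist_cons_self c' I').trans (List.sublist_append_right _ _)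
          · simpa [Lg, List.foldl_cons, KSstep_succ] using hlw
        · right
          obtain ⟨w, hw, hlw⟩ := hB
          refine ⟨b :: w, ?_, ?_⟩
          · have hsplit : ((c :: Ct) ++ c' :: I').filter (fun x => !f x)
                = ((c :: Ct).filter (fun x => !f x)) ++ ((c' :: I').filter (fun x => !f x)) := by
              rw [List.filter_append]
            rw [← hDf, hsplit]
            have hb1 : [b].Sublist ((c :: Ct).filter (fun x => !f x)) := by
              rw [List.singleton_sublist]
              exact List.mem_filter.mpr ⟨hbC, by simp [hfb]⟩
            have hb2 : w.Sublist ((c' :: I').filter (fun x => !f x)) :=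
              hw.trans (List.Sublist.filter _ (List.sublist_cons_self c' I'))
            exact (hb1.append hb2 : (([b] ++ w).Sublist _))
          · simpa [Lg, List.foldl_cons, KSstep_succ] using hlw
      · left
        have hCtrue : ∀ x ∈ c :: Ct, f x = true := by
          intro x hx
          by_contra hx'
          have hxf : (!f x) = true := by simp at hx' ⊢; exact hx'
          have hxD : x ∈ ((c :: Ct) ++ c' :: I').filter (fun x => !f x) :=
            List.mem_filter.mpr ⟨List.mem_append.mpr (Or.inl hx), hxf⟩
          have hsorted : (b :: rest).Pairwise (· < ·) := by
            rw [← hDf]; exact (SpL.sorted hsp).filter _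
          have hble : b ≤ x := head_min hsorted x (hDf ▸ hxD)
          have hbC' : b ∈ c' :: I' := by
            rcases List.mem_append.mp hbD.1 with h | h
            · exact absurd h hbC
            · exact h
          have hxb : x < b :=
            (List.pairwise_append.mp (SpL.sorted hsp)).2.2 x hx b hbC'
          omega
        refine ⟨c :: Ct, ?_, hC⟩
        have heq : List.filter f ((c :: Ct) ++ c' :: I')
            = (c :: Ct) ++ List.filter f (c' :: I') := by
          rw [List.filter_append, List.filter_eq_self.mpr hCtrue]
        rw [heq]
        exact List.sublist_append_left _ _

lemma PL (K : ℕ) (IH : HIH K) (C C' : List ℕ) (f : ℕ → Bool)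
    (hsp : SpL (C ++ C')) (hC : Lg [K+1] C) (hC' : Lg [K+1] C') :
    CoLg [K+1] ((C ++ C').filter f) ∨
      CoLg [K+1] ((C ++ C').filter (fun x => !f x)) := by
  obtain ⟨c, Ct, rfl⟩ : ∃ c Ct, C = c :: Ct := by
    cases C with
    | nil => exact absurd rfl (Lg_ne_nil hC (by simp))
    | cons a b => exact ⟨a, b, rfl⟩
  cases hfc : f c with
  | true => exact PLaux K IH c Ct C' f hsp hC hC' hfc
  | false =>
      have := PLaux K IH c Ct C' (fun x => !f x) hsp hC hC' (by simp [hfc])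
      rcases this with h | h
      · exact Or.inr h
      · left
        have : ((c :: Ct) ++ C').filter (fun x => !(!f x)) = ((c :: Ct) ++ C').filter f := by
          simp
        rwa [this] at h

lemma harvest (K : ℕ) (IH : HIH K) :
    ∀ (Ds : List (List ℕ)) (p q : ℕ) (f : ℕ → Bool), SpL Ds.flatten →
      (∀ D ∈ Ds, ∃ C C', D = C ++ C' ∧ Lg [K+1] C ∧ Lg [K+1] C') →
      p + q ≤ Ds.length + 1 →
      CoLg (List.replicate p (K+1)) (Ds.flatten.filter f) ∨
        CoLg (List.replicate q (K+1)) (Ds.flatten.filter (fun x => !f x)) := by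
  intro Ds
  induction Ds with
  | nil =>
      intro p q f _ _ hlen
      simp only [List.length_nil] at hlen
      rcases Nat.eq_zero_or_pos p with rfl | hp
      · exact Or.inl ⟨[], List.nil_sublist _, by simp [Lg]⟩
      · have hq : q = 0 := by omega
        subst hq
        exact Or.inr ⟨[], List.nil_sublist _, by simp [Lg]⟩
  | cons D Ds ih =>
      intro p q f hsp hprops hlen
      rcases Nat.eq_zero_or_pos p with rfl | hp
      · exact Or.inl ⟨[], List.nil_sublist _, by simp [Lg]⟩
      rcases Nat.eq_zero_or_pos q with rfl | hq
      · exact Or.inr ⟨[], List.nil_sublist _, by simp [Lg]⟩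
      obtain ⟨C, C', hDeq, hC, hC'⟩ := hprops D (List.mem_cons_self)
      have hjoin : (D :: Ds).flatten = D ++ Ds.flatten := by simp
      have hDsub : D.Sublist (D :: Ds).flatten := by
        rw [hjoin]; exact List.sublist_append_left _ _
      have hJsub : Ds.flatten.Sublist (D :: Ds).flatten := by
        rw [hjoin]; exact List.sublist_append_right _ _
      have hspD : SpL D := hsp.sublist hDsub
      have hspJ : SpL Ds.flatten := hsp.sublist hJsub
      have hprops' : ∀ D' ∈ Ds, ∃ C C', D' = C ++ C' ∧ Lg [K+1] C ∧ Lg [K+1] C' :=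
        fun D' hD' => hprops D' (List.mem_cons_of_mem _ hD')
      have hfilsub : (Ds.flatten.filter f).Sublist ((D :: Ds).flatten.filter f) :=
        List.Sublist.filter _ hJsub
      have hfilsub' : (Ds.flatten.filter (fun x => !f x)).Sublist
          ((D :: Ds).flatten.filter (fun x => !f x)) :=
        List.Sublist.filter _ hJsub
      rcases PL K IH C C' f (hDeq ▸ hspD) hC hC' with hA | hB
      · rcases ih (p-1) q f hspJ hprops' (by simp at hlen ⊢; omega) with h1 | h2
        · left
          have hcomb := CoLg_combine (α := List.replicate (p-1) (K+1)) (β := [K+1])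
            (hDeq ▸ hA) h1
          have hrep : List.replicate (p-1) (K+1) ++ [K+1] = List.replicate p (K+1) := by
            rw [← List.replicate_succ']
            congr 1
            omega
          rw [hrep] at hcomb
          have : D.filter f ++ Ds.flatten.filter f = (D :: Ds).flatten.filter f := by
            rw [hjoin, List.filter_append]
          rwa [this] at hcomb
        · exact Or.inr (h2.sub hfilsub')
      · rcases ih p (q-1) f hspJ hprops' (by simp at hlen ⊢; omega) with h1 | h2
        · exact Or.inl (h1.sub hfilsub)
        · right
          have hcomb := CoLg_combine (α := List.replicate (q-1) (K+1)) (β := [K+1])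
            (hDeq ▸ hB) h2
          have hrep : List.replicate (q-1) (K+1) ++ [K+1] = List.replicate q (K+1) := by
            rw [← List.replicate_succ']
            congr 1
            omega
          rw [hrep] at hcomb
          have : D.filter (fun x => !f x) ++ Ds.flatten.filter (fun x => !f x)
              = (D :: Ds).flatten.filter (fun x => !f x) := by
            rw [hjoin, List.filter_append]
          rwa [this] at hcomb

theorem Hsplit : ∀ (K p q : ℕ) (Y : List ℕ) (f : ℕ → Bool), SpL Y →
    CoLg (List.replicate (2*(p+q)) K) Y →
    CoLg (List.replicate p K) (Y.filter f) ∨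
      CoLg (List.replicate q K) (Y.filter (fun x => !f x)) := by
  intro K
  induction K with
  | zero =>
      intro p q Y f hsp hco
      obtain ⟨w, hw, hl⟩ := hco
      have hwlen : 2*(p+q) ≤ w.length := by
        simpa using length_le_of_Lg hl
      have hYlen : w.length ≤ Y.length := hw.length_le
      have hfl := filter_length_split Y f
      by_cases hp : p ≤ (Y.filter f).length
      · exact Or.inl ((Lg_replicate_zero_iff _ _).mpr hp).coLg
      · right
        refine ((Lg_replicate_zero_iff _ _).mpr ?_).coLg
        omega
  | succ K IH =>
      intro p q Y f hsp hco
      obtain ⟨S, hS, hLg⟩ := hco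
      obtain ⟨Ds, hlen, hprops, hsub⟩ := blocksPairs hLg
      have hj : Ds.flatten.Sublist Y := hsub.trans hS
      rcases harvest K IH Ds p q f (hsp.sublist hj) hprops (by omega) with h | h
      · exact Or.inl (h.sub (List.Sublist.filter _ hj))
      · exact Or.inr (h.sub (List.Sublist.filter _ hj))

end KSG

namespace KSG

def peelM : ℕ → ℕ → ℕ
  | 0, T => T + 1
  | k+1, T => 2*(T + peelM k T)

lemma peelM_le (k T : ℕ) : peelM k T ≤ (T+1) * 4^k := by
  induction k with
  | zero => simp [peelM]
  | succ k ih =>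
      have h4 : (T+1) * 4^(k+1) = 4*((T+1) * 4^k) := by ring
      have h1 : 1 ≤ 4^k := Nat.one_le_pow _ _ (by norm_num)
      simp only [peelM]
      nlinarith

lemma peelM_mono {T k k' : ℕ} (h : k ≤ k') : peelM k T ≤ peelM k' T := by
  induction k' with
  | zero => simpa [Nat.le_zero.mp h]
  | succ k' ih =>
      rcases Nat.eq_or_lt_of_le h with rfl | hlt
      · exact le_refl _
      · have := ih (by omega)
        simp only [peelM]
        omega

lemma fin2_eq {a b : Fin 2} (h : (a = 1 ↔ b = 1)) : a = b := by
  fin_cases a <;> fin_cases b <;> simp_all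

lemma opinion_agree {P : ℕ → ℕ → Fin 2} {U : Finset ℕ} {y y' : ℕ}
    (h : U.filter (fun x => P x y = 1) = U.filter (fun x => P x y' = 1)) :
    ∀ x ∈ U, P x y = P x y' := by
  intro x hx
  have h' := Finset.ext_iff.mp h x
  simp only [Finset.mem_filter, hx, true_and] at h'
  exact fin2_eq h'

lemma vals_card {U : Finset ℕ} (vals : List (Finset ℕ)) (hnd : vals.Nodup)
    (hsub : ∀ b ∈ vals, b ⊆ U) : vals.length ≤ 2^U.card := by
  have h1 : vals.toFinset ⊆ U.powerset := by
    intro b hb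
    exact Finset.mem_powerset.mpr (hsub b (List.mem_toFinset.mp hb))
  have h2 := Finset.card_le_card h1
  rwa [List.toFinset_card_of_nodup hnd, Finset.card_powerset] at h2

lemma peel {K T : ℕ} (g : ℕ → Finset ℕ) :
    ∀ (vals : List (Finset ℕ)) (Y : List ℕ), vals.Nodup → SpL Y →
      (∀ y ∈ Y, g y ∈ vals) →
      CoLg (List.replicate (peelM vals.length T) K) Y →
      ∃ b ∈ vals, CoLg (List.replicate T K) (Y.filter (fun y => decide (g y = b))) := by
  intro vals
  induction vals with
  | nil =>
      intro Y _ _ hmem hco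
      obtain ⟨w, hw, hl⟩ := hco
      have hwne : w ≠ [] := Lg_ne_nil hl (by simp [peelM])
      obtain ⟨y, hy⟩ := List.exists_mem_of_ne_nil w hwne
      exact absurd (hmem y (hw.subset hy)) List.not_mem_nil
  | cons b vals ih =>
      intro Y hnd hsp hmem hco
      have hco' : CoLg (List.replicate (2*(T + peelM vals.length T)) K) Y := by
        simpa [peelM, List.length_cons] using hco
      rcases Hsplit K T (peelM vals.length T) Y (fun y => decide (g y = b)) hsp hco' with h | h
      · exact ⟨b, List.mem_cons_self, h⟩
      · have hbv : b ∉ vals := (List.nodup_cons.mp hnd).1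
        set Y' := Y.filter (fun y => !decide (g y = b)) with hY'
        have hmem' : ∀ y ∈ Y', g y ∈ vals := by
          intro y hy
          obtain ⟨hyY, hyb⟩ := List.mem_filter.mp hy
          have : g y ≠ b := by simpa using hyb
          rcases List.mem_cons.mp (hmem y hyY) with h' | h'
          · exact absurd h' this
          · exact h'
        obtain ⟨b', hb', hres⟩ := ih Y' (List.nodup_cons.mp hnd).2
          (hsp.sublist (List.filter_sublist)) hmem' h
        refine ⟨b', List.mem_cons_of_mem _ hb', ?_⟩
        have hbb' : b ≠ b' := fun hEq => hbv (hEq ▸ hb')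
        have hfe : Y'.filter (fun y => decide (g y = b'))
            = Y.filter (fun y => decide (g y = b')) := by
          rw [hY', List.filter_filter]
          refine List.filter_congr ?_
          intro x hx
          by_cases hgx : g x = b'
          · have h9 : g x ≠ b := fun hEq => hbb' ((hEq ▸ hgx) : b = b').symm.symm
            have h10 : ¬ b' = b := fun hEq => hbb' hEq.symm
            simp [hgx, h9, h10]
          · simp [hgx]
        rwa [hfe] at hres

lemma sparse_growth : ∀ (l : List ℕ) (x : ℕ), SpL (x :: l) → 1 ≤ x →
    x * 4^(l.length) ≤ (x :: l).getLast (by simp) := by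
  intro l
  induction l with
  | nil => intro x _ _; simpa using le_refl x
  | cons y l ih =>
      intro x hsp hx
      have hsp' : SpL (y :: l) := hsp.sublist (List.sublist_cons_self _ _)
      have hy3 : 3 ≤ y := hsp.2 y (by simp)
      have hih := ih y hsp' (by omega)
      have hxy : 4^x < y := (List.pairwise_cons.mp hsp.1).1 y (by simp)
      have hx3 : 3 ≤ x := hsp.2 x (by simp)
      have h4x : 4*x ≤ 4^x := four_mul_le (by omega)
      have hlast : ((x :: y :: l).getLast (by simp)) = ((y :: l).getLast (by simp)) := by
        simp [List.getLast_cons]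
      rw [hlast]
      calc x * 4^((y :: l).length) = (4*x) * 4^(l.length) := by
            simp [List.length_cons, pow_succ]; ring
        _ ≤ y * 4^(l.length) := by
            have : 4*x ≤ y := by omega
            exact Nat.mul_le_mul_right _ this
        _ ≤ (y :: l).getLast (by simp) := hih

lemma two_pow_succ_le {s : ℕ} (hs : 2 ≤ s) : 2^(s+1) ≤ 3 * 4^(s-1) := by
  induction s with
  | zero => omega
  | succ s ih =>
      rcases Nat.lt_or_ge s 2 with h | h
      · interval_cases s
        · exfalso; omega
        · norm_num
      · have := ih h
        have h1 : 2^(s+1+1) = 2 * 2^(s+1) := by ring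
        have h2 : 3 * 4^(s+1-1) = 4 * (3 * 4^(s-1)) := by
          have : s + 1 - 1 = (s-1) + 1 := by omega
          rw [this]; ring
        omega

lemma ineq1 {s t : ℕ} (hs : 2 ≤ s) (ht : 3 * 4^(s-1) ≤ t) : (t+1) * 4^(2^s) ≤ 4^t := by
  have h2s : 2^(s+1) ≤ t := le_trans (two_pow_succ_le hs) ht
  have h2s' : 2^(s+1) = 2^s + 2^s := by ring
  set u := t - 2^s with hu
  have hu4 : 2^s ≤ u := by omega
  have hs4 : 4 ≤ 2^s := by
    calc 4 = 2^2 := by norm_num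
    _ ≤ 2^s := Nat.pow_le_pow_right (by norm_num) hs
  have ht1 : t + 1 ≤ 3 * u := by omega
  have h3u : 3*u ≤ 4^u := le_trans (by omega) (four_mul_le (by omega))
  calc (t+1) * 4^(2^s) ≤ 4^u * 4^(2^s) := Nat.mul_le_mul_right _ (le_trans ht1 h3u)
    _ = 4^(u + 2^s) := (pow_add 4 u (2^s)).symm
    _ = 4^t := by congr 1; omega

lemma ineq2 {s W k : ℕ} (hk : k ≤ 2^s) (hW : 3 ≤ W) (hgrow : 2 ≤ s → 3*4^(s-1) ≤ W) :
    peelM k 1 ≤ 4^W := by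
  rcases Nat.lt_or_ge s 2 with hs | hs
  · have hk2 : k ≤ 2 := by interval_cases s <;> omega
    have h1 : peelM k 1 ≤ peelM 2 1 := peelM_mono hk2
    have h2 : peelM 2 1 = 14 := by simp [peelM]
    have : (64:ℕ) ≤ 4^W := by
      calc (64:ℕ) = 4^3 := by norm_num
      _ ≤ 4^W := Nat.pow_le_pow_right (by norm_num) hW
    omega
  · have h1 : peelM k 1 ≤ peelM (2^s) 1 := peelM_mono hk
    have h2 : peelM (2^s) 1 ≤ 2 * 4^(2^s) := peelM_le _ _
    have h3 : 2 * 4^(2^s) ≤ (W+1) * 4^(2^s) := Nat.mul_le_mul_right _ (by omega)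
    have h4 := ineq1 hs (hgrow hs)
    omega

end KSG

namespace KSG

lemma spl_rel {xs : List ℕ} (h : SpL xs) {x y : ℕ} (hx : x ∈ xs) (hy : y ∈ xs)
    (hxy : x < y) : 4^x < y := by
  induction xs with
  | nil => simp at hx
  | cons z zs ih =>
      have hsrt := h.sorted
      rcases List.mem_cons.mp hx with rfl | hx'
      · rcases List.mem_cons.mp hy with rfl | hy'
        · omega
        · exact (List.pairwise_cons.mp h.1).1 y hy'
      · rcases List.mem_cons.mp hy with rfl | hy'
        · have : y < x := (List.pairwise_cons.mp hsrt).1 x hx'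
          omega
        · exact ih (h.sublist (List.sublist_cons_self _ _)) hx' hy'

lemma sublist_merge : ∀ (xs u v : List ℕ), List.Pairwise (·<·) xs → u.Sublist xs →
    v.Sublist xs → (∀ a ∈ u, ∀ b ∈ v, a < b) → (u ++ v).Sublist xs := by
  intro xs
  induction xs with
  | nil =>
      intro u v _ hu hv _
      simp only [List.sublist_nil] at hu hv
      simp [hu, hv]
  | cons x xs ih =>
      intro u v hp hu hv hcross
      cases u with
      | nil => simpa using hv
      | cons a u' =>
          have hvxs : v.Sublist xs ∨ (v = [] ) ∨ (∃ v', v = x :: v' ∧ v'.Sublist xs) := by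
            rcases List.sublist_cons_iff.mp hv with h | ⟨v', rfl, hv'⟩
            · exact Or.inl h
            · exact Or.inr (Or.inr ⟨v', rfl, hv'⟩)
          rcases List.sublist_cons_iff.mp hu with h | ⟨u'', hu'', hu'⟩
          · -- a :: u' <+ xs ; claim v <+ xs
            have haxs : a ∈ xs := h.subset (List.mem_cons_self)
            have hvxs' : v.Sublist xs := by
              rcases hvxs with h' | h' | ⟨v', rfl, hv'⟩
              · exact h'
              · simp [h']
              · exfalso
                have h1 : a < x := hcross a (List.mem_cons_self) x (List.mem_cons_self)
                have h2 : x < a := (List.pairwise_cons.mp hp).1 a haxs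
                omega
            exact ((ih (a::u') v (List.pairwise_cons.mp hp).2 h hvxs' hcross).cons x)
          · -- u = x :: u'' with u'' <+ xs
            cases hu''
            have hvxs' : v.Sublist xs := by
              rcases hvxs with h' | h' | ⟨v', rfl, hv'⟩
              · exact h'
              · simp [h']
              · exfalso
                have h1 : x < x := hcross x (List.mem_cons_self) x (List.mem_cons_self)
                omega
            have := ih u' v (List.pairwise_cons.mp hp).2 hu' hvxs'
              (fun a ha b hb => hcross a (List.mem_cons_of_mem _ ha) b hb)
            simpa using this.cons₂ x

lemma sort_spl {X : Finset ℕ} (hs : ExpSparse X) : SpL (X.sort (·≤·)) := by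
  constructor
  · have h1 : (X.sort (·≤·)).Pairwise (·<·) := (Finset.sortedLT_sort X).pairwise
    refine h1.imp_of_mem ?_
    intro a b ha hb hab
    exact hs.2 a ((Finset.mem_sort _).mp ha) b ((Finset.mem_sort _).mp hb) hab
  · intro x hx
    exact hs.1 x ((Finset.mem_sort _).mp hx)

lemma sort_toFinset_eq {l : List ℕ} (h : l.Pairwise (·<·)) : l.toFinset.sort (·≤·) = l := by
  have hnd : l.Nodup := h.imp (fun hlt => ne_of_lt hlt)
  refine (fun hp hpe => List.Perm.eq_of_pairwise' (Finset.pairwise_sort _ _) hpe hp) ?_ ?_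
  · exact (Finset.sort_perm_toList _ _).trans (List.toFinset_toList hnd)
  · exact h.imp (fun hlt => le_of_lt hlt)

lemma sup_id_toFinset : ∀ (l : List ℕ), l.Pairwise (·<·) → ∀ (hne : l ≠ []),
    l.toFinset.sup id = l.getLast hne := by
  intro l
  induction l with
  | nil => intro _ hne; exact absurd rfl hne
  | cons x l ih =>
      intro hp hne
      cases l with
      | nil => simp
      | cons y l =>
          have h1 : (y :: l).toFinset.sup id = (y :: l).getLast (by simp) :=
            ih (List.pairwise_cons.mp hp).2 (by simp)
          have h2 : ((x :: y :: l).getLast hne) = ((y :: l).getLast (by simp)) := by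
            simp [List.getLast_cons]
          have hx : x ≤ (y :: l).getLast (by simp) := by
            have : (y :: l).getLast (by simp) ∈ y :: l := List.getLast_mem _
            exact le_of_lt ((List.pairwise_cons.mp hp).1 _ this)
          rw [h2, List.toFinset_cons, Finset.sup_insert, h1]
          simp only [id_eq, sup_eq_right]
          omega

lemma extract1 {K c : ℕ} {Ct : List ℕ} (h : Lg (List.replicate c K) Ct) (hc : 1 ≤ c) :
    ∃ C₁, C₁.Sublist Ct ∧ Lg [K] C₁ := by
  have h' : Lg (List.replicate (c-1) K ++ [K]) Ct := by
    have : List.replicate (c-1) K ++ [K] = List.replicate c K := by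
      rw [← List.replicate_succ']
      congr 1
      omega
    rwa [this]
  obtain ⟨ys, zs, rfl, hy, _⟩ := Lg_append_split h'
  exact ⟨ys, List.sublist_append_left _ _, hy⟩

lemma step_down {K : ℕ} {C : List ℕ} (h : Lg [K+1] C) (h3 : ∀ x ∈ C, 1 ≤ x) :
    ∃ C₁, C₁.Sublist C ∧ Lg [K] C₁ := by
  obtain ⟨c, Ct, rfl⟩ : ∃ c Ct, C = c :: Ct := by
    cases C with
    | nil => exact absurd rfl (Lg_ne_nil h (by simp))
    | cons a b => exact ⟨a, b, rfl⟩
  have hI : Lg (List.replicate c K) Ct := by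
    simpa [Lg, List.foldl_cons, KSstep_succ] using h
  obtain ⟨C₁, hs, hl⟩ := extract1 hI (h3 c (by simp))
  exact ⟨C₁, hs.trans (List.sublist_cons_self _ _), hl⟩

lemma step_down_iter {K j : ℕ} : ∀ {C : List ℕ}, Lg [K+j] C → (∀ x ∈ C, 1 ≤ x) →
    ∃ C₁, C₁.Sublist C ∧ Lg [K] C₁ := by
  induction j with
  | zero => intro C h _; exact ⟨C, List.Sublist.refl _, h⟩
  | succ j ih =>
      intro C h h3
      obtain ⟨C₁, hs, hl⟩ := step_down (show Lg [(K+j)+1] C from h) h3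
      obtain ⟨C₂, hs₂, hl₂⟩ := ih hl (fun x hx => h3 x (hs.subset hx))
      exact ⟨C₂, hs₂.trans hs, hl₂⟩

/-- peel the list `Y` into opinion classes about `U`; returns a `T`-large kept part
on which all elements share their opinion about every `x ∈ U`. -/
lemma peel_opinion {K T M : ℕ} (P : ℕ → ℕ → Fin 2) (U : Finset ℕ) {Y : List ℕ}
    (hsp : SpL Y) (hco : Lg (List.replicate M K) Y)
    (hM : peelM (2^U.card) T ≤ M) :
    ∃ Z, Z.Sublist Y ∧ Lg (List.replicate T K) Z ∧
      ∀ x ∈ U, ∀ y ∈ Z, ∀ y' ∈ Z, P x y = P x y' := by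
  set g : ℕ → Finset ℕ := fun y => U.filter (fun x => P x y = 1) with hg
  set vals : List (Finset ℕ) := (Y.map g).dedup with hvals
  have hnd : vals.Nodup := List.nodup_dedup _
  have hmem : ∀ y ∈ Y, g y ∈ vals := fun y hy =>
    List.mem_dedup.mpr (List.mem_map.mpr ⟨y, hy, rfl⟩)
  have hsubU : ∀ b ∈ vals, b ⊆ U := by
    intro b hb
    obtain ⟨y, _, rfl⟩ := List.mem_map.mp (List.mem_dedup.mp hb)
    exact Finset.filter_subset _ _
  have hlen : vals.length ≤ 2^U.card := vals_card vals hnd hsubU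
  have hco' : CoLg (List.replicate (peelM vals.length T) K) Y :=
    CoLg_weaken hco.coLg (le_trans (peelM_mono hlen) hM)
  obtain ⟨b, _, hres⟩ := peel g vals Y hnd hsp hmem hco'
  obtain ⟨Z, hZ, hlZ⟩ := hres
  refine ⟨Z, hZ.trans (List.filter_sublist), hlZ, ?_⟩
  intro x hx y hy y' hy'
  have h1 : g y = b := by simpa using (List.mem_filter.mp (hZ.subset hy)).2
  have h2 : g y' = b := by simpa using (List.mem_filter.mp (hZ.subset hy')).2
  exact opinion_agree (h1.trans h2.symm) x hx

end KSG

namespace KSG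

lemma pass1 (P : ℕ → ℕ → Fin 2) (κ : ℕ) (xs : List ℕ) (hxs : SpL xs) :
    ∀ (m : ℕ) (pool U : List ℕ),
      pool.Sublist xs → U.Sublist xs →
      (∀ x ∈ U, ∀ y ∈ pool, x < y) →
      (∀ y ∈ pool, 64 < y) →
      Lg (List.replicate m (κ+1)) pool →
      ∃ Bs : List (List ℕ), Bs.length = m ∧
        (∀ B ∈ Bs, B ≠ [] ∧ B.Sublist pool ∧ Lg [κ] B) ∧
        List.Pairwise (fun B B' => ∀ x ∈ B, ∀ y ∈ B', x < y) Bs ∧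
        (∀ B ∈ Bs, ∀ x ∈ U, ∀ y ∈ B, ∀ y' ∈ B, P x y = P x y') ∧
        List.Pairwise (fun B B' => ∀ x ∈ B, ∀ y ∈ B', ∀ y' ∈ B', P x y = P x y') Bs := by
  intro m
  induction m with
  | zero =>
      intro pool U _ _ _ _ _
      exact ⟨[], rfl, by simp, by simp, by simp, by simp⟩
  | succ m ih =>
      intro pool U hpool hU hUp hbig hL
      rw [List.replicate_succ'] at hL
      obtain ⟨Z, pool', rfl, hZ, hpool'L⟩ := Lg_append_split hL
      have hZsub : Z.Sublist (Z ++ pool') := List.sublist_append_left _ _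
      have hpool'sub : pool'.Sublist (Z ++ pool') := List.sublist_append_right _ _
      have hsppool : SpL (Z ++ pool') := hxs.sublist hpool
      have hcrossZ : ∀ a ∈ Z, ∀ b ∈ pool', a < b :=
        (List.pairwise_append.mp hsppool.sorted).2.2
      obtain ⟨ζ, Zint, rfl⟩ : ∃ ζ Zint, Z = ζ :: Zint := by
        cases Z with
        | nil => exact absurd rfl (Lg_ne_nil hZ (by simp))
        | cons a b => exact ⟨a, b, rfl⟩
      have hZint : Lg (List.replicate ζ κ) Zint := by
        simpa [Lg, List.foldl_cons, KSstep_succ] using hZ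
      have hZintsub : Zint.Sublist (ζ :: Zint) := List.sublist_cons_self _ _
      have hUnd : U.Pairwise (·<·) := (hxs.sorted).sublist hU
      have hUcard : U.toFinset.card = U.length :=
        List.toFinset_card_of_nodup (hUnd.imp (fun h => ne_of_lt h))
      have hζpool : ζ ∈ (ζ :: Zint) ++ pool' := by simp
      have hζ64 : 64 < ζ := hbig ζ hζpool
      have hineq : peelM (2^(U.toFinset.card)) 1 ≤ ζ := by
        rw [hUcard]
        cases hUe : U with
        | nil =>
            have h6 : peelM (2^(List.length ([] : List ℕ))) 1 = 6 := by norm_num [peelM]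
            omega
        | cons u U' =>
            rw [show ((u :: U').length = U.length) from by rw [hUe]]
            have hUne : U ≠ [] := by simp [hUe]
            set W := U.getLast hUne with hW
            have hWU : W ∈ U := List.getLast_mem hUne
            have hW3 : 3 ≤ W := (hxs.sublist hU).2 W hWU
            have hWζ : 4^W < ζ :=
              spl_rel hxs (hU.subset hWU) (hpool.subset hζpool) (hUp W hWU ζ hζpool)
            have hgrow : 3*4^(U.length - 1) ≤ W := by
              have hspU : SpL U := hxs.sublist hU
              have hu3 : 3 ≤ u := hspU.2 u (by simp [hUe])
              have := sparse_growth U' u (by rwa [hUe] at hspU) (by omega)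
              have hlast : (u :: U').getLast (by simp) = W := by
                rw [hW]; congr 1; exact hUe.symm
              rw [hlast] at this
              have hlen : U.length - 1 = U'.length := by simp [hUe]
              rw [hlen]
              calc 3*4^U'.length ≤ u * 4^U'.length := Nat.mul_le_mul_right _ hu3
                _ ≤ W := this
            have := ineq2 (k := 2^U.length) (s := U.length) (W := W) (le_refl _) hW3
              (fun _ => hgrow)
            omega
      have hspZint : SpL Zint :=
        hxs.sublist ((hZintsub.trans hZsub).trans hpool)
      obtain ⟨B, hBsub, hBLg, hBagr⟩ := peel_opinion P U.toFinset hspZint hZint hineq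
      have hBLg' : Lg [κ] B := by simpa using hBLg
      have hBZ : B.Sublist (ζ :: Zint) := hBsub.trans hZintsub
      have hBpool : B.Sublist (ζ :: Zint ++ pool') := hBZ.trans hZsub
      have hBxs : B.Sublist xs := hBpool.trans hpool
      have hUB : (U ++ B).Sublist xs := by
        refine sublist_merge xs U B hxs.sorted hU hBxs ?_
        intro a ha b hb
        exact hUp a ha b (hBpool.subset hb)
      have hcross' : ∀ x ∈ U ++ B, ∀ y ∈ pool', x < y := by
        intro x hx y hy
        rcases List.mem_append.mp hx with hx' | hx'
        · exact hUp x hx' y (hpool'sub.subset hy)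
        · exact hcrossZ x (hBZ.subset hx') y hy
      obtain ⟨Bs, hlen, hprops, hord, hagrU, hagrP⟩ :=
        ih pool' (U ++ B) (hpool'sub.trans hpool) hUB hcross'
          (fun y hy => hbig y (hpool'sub.subset hy)) hpool'L
      refine ⟨B :: Bs, by simp [hlen], ?_, ?_, ?_, ?_⟩
      · intro B' hB'
        rcases List.mem_cons.mp hB' with rfl | hB'
        · exact ⟨Lg_ne_nil hBLg' (by simp), hBpool, hBLg'⟩
        · obtain ⟨h1, h2, h3⟩ := hprops B' hB'
          exact ⟨h1, h2.trans hpool'sub, h3⟩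
      · refine List.pairwise_cons.mpr ⟨?_, hord⟩
        intro B' hB' x hx y hy
        exact hcrossZ x (hBZ.subset hx) y ((hprops B' hB').2.1.subset hy)
      · intro B' hB' x hx y hy y' hy'
        rcases List.mem_cons.mp hB' with rfl | hB'
        · exact hBagr x (List.mem_toFinset.mpr hx) y hy y' hy'
        · exact hagrU B' hB' x (List.mem_append.mpr (Or.inl hx)) y hy y' hy'
      · refine List.pairwise_cons.mpr ⟨?_, hagrP⟩
        intro B' hB' x hx y hy y' hy'
        exact hagrU B' hB' x (List.mem_append.mpr (Or.inr hx)) y hy y' hy'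

lemma pass2 (P : ℕ → ℕ → Fin 2) (κ : ℕ) (xs : List ℕ) (hxs : SpL xs) :
    ∀ (Bs : List (List ℕ)) (W₀ : ℕ),
      (∀ B ∈ Bs, B ≠ [] ∧ B.Sublist xs ∧ Lg [κ+1] B) →
      (2^(Bs.length) + 1 ≤ W₀) →
      (∀ B ∈ Bs, ∀ y ∈ B, 4^W₀ < y) →
      ∃ Gs : List (List ℕ), Gs.length = Bs.length ∧
        (∀ i, i < Bs.length → (Gs.getD i []).Sublist (Bs.getD i []) ∧
          Gs.getD i [] ≠ [] ∧ Lg [κ] (Gs.getD i [])) ∧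
        (∀ i j, i < j → j < Bs.length → ∀ x ∈ Gs.getD i [], ∀ x' ∈ Gs.getD i [],
          P x ((Bs.getD j []).headI) = P x' ((Bs.getD j []).headI)) := by
  intro Bs
  induction Bs with
  | nil =>
      intro W₀ _ _ _
      exact ⟨[], rfl, by intro i hi; simp at hi, by intro i j _ hj; simp at hj⟩
  | cons B Bs ih =>
      intro W₀ hprops hW hbig
      obtain ⟨hne, hsub, hLg⟩ := hprops B (List.mem_cons_self)
      obtain ⟨β, Bint, rfl⟩ : ∃ β Bint, B = β :: Bint := by
        cases B with
        | nil => exact absurd rfl hne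
        | cons a b => exact ⟨a, b, rfl⟩
      have hBint : Lg (List.replicate β κ) Bint := by
        simpa [Lg, List.foldl_cons, KSstep_succ] using hLg
      set U : Finset ℕ := (Bs.map List.headI).toFinset with hUdef
      have hcard : U.card ≤ Bs.length := by
        calc U.card ≤ (Bs.map List.headI).length := List.toFinset_card_le _
          _ = Bs.length := by simp
      have hβbig : 4^W₀ < β := hbig _ (List.mem_cons_self) β (by simp)
      have hineq : peelM (2^U.card) 1 ≤ β := by
        have h1 : peelM (2^U.card) 1 ≤ peelM (2^Bs.length) 1 :=
          peelM_mono (Nat.pow_le_pow_right (by norm_num) hcard)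
        have h2 : peelM (2^Bs.length) 1 ≤ 2 * 4^(2^Bs.length) := peelM_le _ _
        have h3 : 2 * 4^(2^Bs.length) ≤ 4^(2^Bs.length + 1) := by
          rw [pow_succ]
          have : 1 ≤ 4^(2^Bs.length) := Nat.one_le_pow _ _ (by norm_num)
          omega
        have h4 : (4:ℕ)^(2^Bs.length + 1) ≤ 4^W₀ :=
          Nat.pow_le_pow_right (by norm_num) (by simp at hW; omega)
        omega
      have hspBint : SpL Bint :=
        hxs.sublist ((List.sublist_cons_self β Bint).trans hsub)
      obtain ⟨G, hGsub, hGLg, hGagr⟩ :=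
        peel_opinion (fun a b => P b a) U hspBint hBint hineq
      have hGLg' : Lg [κ] G := by simpa using hGLg
      obtain ⟨Gs, hlen, hpropsG, hagr⟩ := ih W₀
        (fun B' hB' => hprops B' (List.mem_cons_of_mem _ hB'))
        (by
          have h5 : (2:ℕ)^Bs.length ≤ 2^(Bs.length + 1) :=
            Nat.pow_le_pow_right (by norm_num) (Nat.le_succ _)
          simp only [List.length_cons] at hW
          omega)
        (fun B' hB' => hbig B' (List.mem_cons_of_mem _ hB'))
      refine ⟨G :: Gs, by simp [hlen], ?_, ?_⟩
      · intro i hi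
        cases i with
        | zero =>
            refine ⟨?_, Lg_ne_nil hGLg' (by simp), hGLg'⟩
            simpa using hGsub.trans (List.sublist_cons_self β Bint)
        | succ i =>
            simp only [List.getD_cons_succ]
            exact hpropsG i (by simpa using hi)
      · intro i j hij hj x hx x' hx'
        cases j with
        | zero => omega
        | succ j =>
            cases i with
            | zero =>
                simp only [List.getD_cons_succ, List.getD_cons_zero] at hx hx' ⊢
                have hjlen : j < Bs.length := by simpa using hj
                have hmemB : Bs.getD j [] ∈ Bs := by
                  rw [List.getD_eq_getElem _ _ hjlen]
                  exact List.getElem_mem _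
                have hrU : (Bs.getD j []).headI ∈ U := by
                  rw [hUdef]
                  exact List.mem_toFinset.mpr (List.mem_map.mpr ⟨_, hmemB, rfl⟩)
                exact hGagr _ hrU x hx x' hx'
            | succ i =>
                simp only [List.getD_cons_succ] at hx hx' ⊢
                exact hagr i j (by omega) (by simpa using hj) x hx x' hx'

end KSG

namespace KSG

lemma headI_mem {l : List ℕ} (h : l ≠ []) : l.headI ∈ l := by
  cases l with
  | nil => exact absurd rfl h
  | cons a l => simp

lemma le_getLast : ∀ (l : List ℕ), l.Pairwise (·<·) → ∀ (hne : l ≠ []), ∀ x ∈ l,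
    x ≤ l.getLast hne := by
  intro l
  induction l with
  | nil => intro _ hne; exact absurd rfl hne
  | cons a l ih =>
      intro hp hne x hx
      cases l with
      | nil =>
          rcases List.mem_cons.mp hx with rfl | hx'
          · simp
          · simp at hx'
      | cons b l' =>
          have hgl : (a :: b :: l').getLast hne = (b :: l').getLast (by simp) :=
            List.getLast_cons (by simp)
          rcases List.mem_cons.mp hx with rfl | hx'
          · have hb : (b::l').getLast (by simp) ∈ b :: l' := List.getLast_mem _
            have := (List.pairwise_cons.mp hp).1 _ hb
            rw [hgl]; omega
          · have := ih (List.pairwise_cons.mp hp).2 (by simp) x hx'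
            rw [hgl]; exact this

lemma fin2_resolve {a b : Fin 2} (h1 : ¬ a = 1) (h2 : ¬ b = 1) : a = b := by
  fin_cases a <;> fin_cases b <;> simp_all

lemma extract_list {K j : ℕ} : ∀ (Gs : List (List ℕ)),
    (∀ G ∈ Gs, Lg [K+j] G ∧ ∀ x ∈ G, 1 ≤ x) →
    ∃ Fs : List (List ℕ), Fs.length = Gs.length ∧
      ∀ i, i < Gs.length → (Fs.getD i []).Sublist (Gs.getD i []) ∧ Lg [K] (Fs.getD i []) := by
  intro Gs
  induction Gs with
  | nil => intro _; exact ⟨[], rfl, by intro i hi; simp at hi⟩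
  | cons G Gs ih =>
      intro h
      obtain ⟨hG, hG1⟩ := h G (List.mem_cons_self)
      obtain ⟨F, hFs, hFl⟩ := step_down_iter hG hG1
      obtain ⟨Fs, hlen, hprop⟩ := ih (fun G' hG' => h G' (List.mem_cons_of_mem _ hG'))
      refine ⟨F :: Fs, by simp [hlen], ?_⟩
      intro i hi
      cases i with
      | zero => simpa using ⟨hFs, hFl⟩
      | succ i => simpa [List.getD_cons_succ] using hprop i (by simpa using hi)

lemma toFinset_sub {w xs : List ℕ} {X : Finset ℕ} (hw : w.Sublist xs)
    (hxs : xs = X.sort (·≤·)) : w.toFinset ⊆ X := by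
  intro x hx
  have : x ∈ xs := hw.subset (List.mem_toFinset.mp hx)
  rw [hxs] at this
  exact (Finset.mem_sort _).mp this

end KSG

namespace KSG

theorem main (n : ℕ) (X : Finset ℕ)
    (hX : IsLarge [n + 6] X) (hs : ExpSparse X) :
    AdmitsGrouping [n] [1] X := by
  intro P
  classical
  set xs : List ℕ := X.sort (·≤·) with hxsdef
  have hspl : SpL xs := sort_spl hs
  have hLgX : Lg [n+6] xs := hX
  obtain ⟨a, xs₁, hxs_eq⟩ : ∃ a xs₁, xs = a :: xs₁ := by
    cases hxs : xs with
    | nil =>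
        rw [hxs] at hLgX
        exact absurd ((Lg_nil_iff _).mp hLgX) (by simp)
    | cons a l => exact ⟨a, l, rfl⟩
  have hxs1 : Lg (List.replicate a (n+5)) xs₁ := by
    have h0 : Lg [n+6] (a :: xs₁) := hxs_eq ▸ hLgX
    simpa [Lg, List.foldl_cons, KSstep_succ] using h0
  have ha3 : 3 ≤ a := hspl.2 a (by rw [hxs_eq]; simp)
  have hxs1sub : xs₁.Sublist xs := by rw [hxs_eq]; exact List.sublist_cons_self _ _
  have hsp1 : SpL xs₁ := hspl.sublist hxs1sub
  have hagt : ∀ y ∈ xs₁, a < y := by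
    intro y hy
    have hsrt := hspl.sorted
    rw [hxs_eq] at hsrt
    exact (List.pairwise_cons.mp hsrt).1 y hy
  have h64 : ∀ y ∈ xs₁, 64 < y := by
    intro y hy
    have h4 : 4^a < y := spl_rel hspl (by rw [hxs_eq]; simp)
      (hxs1sub.subset hy) (hagt y hy)
    have h5 : (4:ℕ)^3 ≤ 4^a := Nat.pow_le_pow_right (by norm_num) ha3
    have : (4:ℕ)^3 = 64 := by norm_num
    omega
  have h3xs : ∀ y ∈ xs, 3 ≤ y := hspl.2
  -- split xs₁ = ys ++ zs
  have hxs1' : Lg (List.replicate (a-1) (n+5) ++ [n+5]) xs₁ := by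
    have he : List.replicate (a-1) (n+5) ++ [n+5] = List.replicate a (n+5) := by
      rw [← List.replicate_succ']; congr 1; omega
    rwa [he]
  obtain ⟨ys, zs, hyszs, hys, hzs⟩ := Lg_append_split hxs1'
  have hyssub : ys.Sublist xs₁ := by rw [hyszs]; exact List.sublist_append_left _ _
  have hzssub : zs.Sublist xs₁ := by rw [hyszs]; exact List.sublist_append_right _ _
  have hyszs_cross : ∀ x ∈ ys, ∀ y ∈ zs, x < y := by
    have h := hsp1.sorted
    rw [hyszs] at h
    exact (List.pairwise_append.mp h).2.2
  -- extract C1 with Lg [n+1]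
  obtain ⟨C1, hC1ys, hC1⟩ := step_down_iter (K := n+1) (j := 4)
    (show Lg [n+1+4] ys from hys)
    (fun x hx => by have := h3xs x ((hyssub.trans hxs1sub).subset hx); omega)
  have hC1ne : C1 ≠ [] := Lg_ne_nil hC1 (by simp)
  have hC1xs1 : C1.Sublist xs₁ := hC1ys.trans hyssub
  have hC1xs : C1.Sublist xs := hC1xs1.trans hxs1sub
  have hC1sorted : C1.Pairwise (·<·) := hspl.sorted.sublist hC1xs
  set t := C1.getLast hC1ne with ht
  have htC1 : t ∈ C1 := List.getLast_mem _
  have htxs1 : t ∈ xs₁ := hC1xs1.subset htC1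
  obtain ⟨c, Ct, hC1eq⟩ : ∃ c Ct, C1 = c :: Ct := by
    cases C1 with
    | nil => exact absurd rfl hC1ne
    | cons u v => exact ⟨u, v, rfl⟩
  have hCt : Lg (List.replicate c n) Ct := by
    have := hC1eq ▸ hC1
    simpa [Lg, List.foldl_cons, KSstep_succ] using this
  have hc64 : 64 < c := h64 c (hC1xs1.subset (by rw [hC1eq]; simp))
  have hCtlen : c ≤ Ct.length := by
    have := length_le_of_Lg hCt
    simpa using this
  have hC1len2 : 2 ≤ C1.length := by rw [hC1eq]; simp; omega
  have hC1grow : 3 * 4^(C1.length - 1) ≤ t := by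
    have hsg := sparse_growth Ct c (by rw [← hC1eq]; exact hspl.sublist hC1xs) (by omega)
    have hgl : (c :: Ct).getLast (by simp) = t := by rw [ht]; congr 1; exact hC1eq.symm
    rw [hgl] at hsg
    have h1 : 3 * 4^Ct.length ≤ c * 4^Ct.length := Nat.mul_le_mul_right _ (by omega)
    have h2 : C1.length - 1 = Ct.length := by rw [hC1eq]; simp
    rw [h2]
    omega
  have ht3 : 3 ≤ t := h3xs t (hxs1sub.subset htxs1)
  -- split zs = (w₀ :: W') ++ rest
  have hzs' : Lg (List.replicate (a-2) (n+5) ++ [n+5]) zs := by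
    have he : List.replicate (a-2) (n+5) ++ [n+5] = List.replicate (a-1) (n+5) := by
      rw [← List.replicate_succ']; congr 1; omega
    rwa [he]
  obtain ⟨W, rest, hWrest, hW5, _⟩ := Lg_append_split hzs'
  have hWsub : W.Sublist zs := by rw [hWrest]; exact List.sublist_append_left _ _
  obtain ⟨w₀, W', hWeq⟩ : ∃ w₀ W', W = w₀ :: W' := by
    cases W with
    | nil => exact absurd rfl (Lg_ne_nil hW5 (by simp))
    | cons u v => exact ⟨u, v, rfl⟩
  have hW' : Lg (List.replicate w₀ (n+4)) W' := by
    have := hWeq ▸ hW5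
    simpa [Lg, List.foldl_cons, KSstep_succ] using this
  have hw₀zs : w₀ ∈ zs := hWsub.subset (by rw [hWeq]; simp)
  have hw₀xs : w₀ ∈ xs := hxs1sub.subset (hzssub.subset hw₀zs)
  have htw₀ : t < w₀ := hyszs_cross t (hC1ys.subset htC1) w₀ hw₀zs
  have h4tw₀ : 4^t < w₀ := spl_rel hspl (hC1xs.subset htC1) hw₀xs htw₀
  have hW'sub : W'.Sublist xs := by
    have h1 : W'.Sublist W := by rw [hWeq]; exact List.sublist_cons_self _ _
    exact ((h1.trans hWsub).trans hzssub).trans hxs1sub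
  have hW'big : ∀ y ∈ W', 4^w₀ < y := by
    intro y hy
    have hsrt := hspl.sorted.sublist ((hWsub.trans hzssub).trans hxs1sub)
    rw [hWeq] at hsrt
    have hlt : w₀ < y := (List.pairwise_cons.mp hsrt).1 y hy
    exact spl_rel hspl hw₀xs (hW'sub.subset hy) hlt
  -- pool peel : all of the kept pool agrees about C1
  have hC1card : C1.toFinset.card = C1.length :=
    List.toFinset_card_of_nodup (hC1sorted.imp (fun h => ne_of_lt h))
  have hpoolineq : peelM (2^(C1.toFinset.card)) t ≤ w₀ := by
    rw [hC1card]
    have h1 : peelM (2^C1.length) t ≤ (t+1) * 4^(2^C1.length) := peelM_le _ _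
    have h2 : (t+1) * 4^(2^C1.length) ≤ 4^t := ineq1 hC1len2 hC1grow
    omega
  obtain ⟨Ypool, hYsubW', hYLg, hYagr⟩ :=
    peel_opinion P C1.toFinset (hspl.sublist hW'sub) hW' hpoolineq
  have hYsub : Ypool.Sublist xs := hYsubW'.trans hW'sub
  have hYzs : Ypool.Sublist zs := hYsubW'.trans ((by rw [hWeq]; exact List.sublist_cons_self _ _ : W'.Sublist W).trans hWsub)
  have hYne : Ypool ≠ [] := Lg_ne_nil hYLg (by
    simp [List.replicate_eq_nil_iff]
    omega)
  set y₀ := Ypool.headI with hy₀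
  have hy₀Y : y₀ ∈ Ypool := headI_mem hYne
  -- F1 : binary split of Ct by colour towards y₀
  have hCtsub : Ct.Sublist xs := (by rw [hC1eq]; exact List.sublist_cons_self _ _ : Ct.Sublist C1).trans hC1xs
  have hCt4 : CoLg (List.replicate (2*(1+1)) n) Ct :=
    CoLg_weaken hCt.coLg (by omega)
  have hF1ex : ∃ F1, F1.Sublist Ct ∧ Lg [n] F1 ∧
      (∀ x ∈ F1, ∀ x' ∈ F1, P x y₀ = P x' y₀) := by
    rcases Hsplit n 1 1 Ct (fun x => decide (P x y₀ = 1)) (hspl.sublist hCtsub) hCt4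
      with h | h
    · obtain ⟨F1, hsub, hLg⟩ := h
      refine ⟨F1, hsub.trans (List.filter_sublist), by simpa using hLg, ?_⟩
      intro x hx x' hx'
      have h1 : P x y₀ = 1 := by simpa using (List.mem_filter.mp (hsub.subset hx)).2
      have h2 : P x' y₀ = 1 := by simpa using (List.mem_filter.mp (hsub.subset hx')).2
      rw [h1, h2]
    · obtain ⟨F1, hsub, hLg⟩ := h
      refine ⟨F1, hsub.trans (List.filter_sublist), by simpa using hLg, ?_⟩
      intro x hx x' hx'
      have h1 : ¬ (P x y₀ = 1) := by simpa using (List.mem_filter.mp (hsub.subset hx)).2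
      have h2 : ¬ (P x' y₀ = 1) := by simpa using (List.mem_filter.mp (hsub.subset hx')).2
      exact fin2_resolve h1 h2
  obtain ⟨F1, hF1Ct, hF1Lg, hF1eps⟩ := hF1ex
  have hF1C1 : F1.Sublist C1 := hF1Ct.trans (by rw [hC1eq]; exact List.sublist_cons_self _ _)
  have hF1ne : F1 ≠ [] := Lg_ne_nil hF1Lg (by simp)
  -- pass 1 : zones
  obtain ⟨Bs, hBslen, hBsprops, hBsord, _, hBsagr⟩ :=
    pass1 P (n+3) xs hspl t Ypool [] hYsub (List.nil_sublist _)
      (by intro x hx; simp at hx)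
      (fun y hy => h64 y (hzssub.subset (hYzs.subset hy)))
      (show Lg (List.replicate t ((n+3)+1)) Ypool from hYLg)
  -- pass 2 : representative agreement
  have hw₀3 : 3 ≤ w₀ := h3xs w₀ hw₀xs
  obtain ⟨GsP, hGsPlen, hGsPprops, hGsPagr⟩ :=
    pass2 P (n+2) xs hspl Bs w₀
      (by
        intro B hB
        obtain ⟨h1, h2, h3⟩ := hBsprops B hB
        exact ⟨h1, (h2.trans hYsub), h3⟩)
      (by
        rw [hBslen]
        have h1 : (2:ℕ)^t < 4^t := Nat.pow_lt_pow_left (by norm_num) (by omega)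
        omega)
      (by
        intro B hB y hy
        exact hW'big y (hYsubW'.subset ((hBsprops B hB).2.1.subset hy)))
  -- extract [n]-large groups
  have hBmem : ∀ i, i < Bs.length → Bs.getD i [] ∈ Bs := by
    intro i hi
    rw [List.getD_eq_getElem _ _ hi]
    exact List.getElem_mem _
  have hBYpool : ∀ i, i < Bs.length → (Bs.getD i []).Sublist Ypool :=
    fun i hi => (hBsprops _ (hBmem i hi)).2.1
  have hBne : ∀ i, i < Bs.length → Bs.getD i [] ≠ [] :=
    fun i hi => (hBsprops _ (hBmem i hi)).1
  obtain ⟨Fs2, hFs2len, hFs2props⟩ := extract_list (K := n) (j := 2) GsP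
    (by
      intro G hG
      obtain ⟨i, hi, hGi⟩ := List.mem_iff_getElem.mp hG
      have hi' : i < Bs.length := by rw [← hGsPlen]; exact hi
      have hGeq : GsP.getD i [] = G := by rw [List.getD_eq_getElem _ _ hi]; exact hGi
      obtain ⟨hsub, hne, hLg⟩ := hGsPprops i hi'
      rw [hGeq] at hsub hLg
      refine ⟨hLg, ?_⟩
      intro x hx
      have hxX : x ∈ xs := hYsub.subset ((hBYpool i hi').subset (hsub.subset hx))
      have := h3xs x hxX
      omega)
  -- the full list of groups
  set GsAll : List (List ℕ) := F1 :: Fs2 with hGsAll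
  have hAlllen : GsAll.length = t + 1 := by
    simp [hGsAll, hFs2len, hGsPlen, hBslen]
  have hidx : ∀ i, i < t → i < Bs.length := fun i hi => by omega
  have hidx2 : ∀ i, i < t → i < GsP.length := fun i hi => by omega
  -- pointwise facts
  have hLsubB : ∀ i, i < t → (Fs2.getD i []).Sublist (Bs.getD i []) := by
    intro i hi
    exact ((hFs2props i (hidx2 i hi)).1).trans ((hGsPprops i (hidx i hi)).1)
  have hLsubG : ∀ i, i < t → (Fs2.getD i []).Sublist (GsP.getD i []) :=
    fun i hi => (hFs2props i (hidx2 i hi)).1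
  have hLLg : ∀ i, i < t → Lg [n] (Fs2.getD i []) :=
    fun i hi => (hFs2props i (hidx2 i hi)).2
  have hK1 : ∀ i, i < t + 1 → (GsAll.getD i []) ≠ [] ∧ Lg [n] (GsAll.getD i []) ∧
      (GsAll.getD i []).Sublist xs := by
    intro i hi
    cases i with
    | zero =>
        simp only [hGsAll, List.getD_cons_zero]
        exact ⟨hF1ne, hF1Lg, hF1C1.trans hC1xs⟩
    | succ i =>
        simp only [hGsAll, List.getD_cons_succ]
        have hit : i < t := by omega
        have hsub : (Fs2.getD i []).Sublist xs :=
          ((hLsubB i hit).trans (hBYpool i (hidx i hit))).trans hYsub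
        exact ⟨Lg_ne_nil (hLLg i hit) (by simp), hLLg i hit, hsub⟩
  have hgetget : ∀ (i : ℕ) (hi : i < Bs.length), Bs.get ⟨i, hi⟩ = Bs.getD i [] := by
    intro i hi
    rw [List.getD_eq_getElem _ _ hi, List.get_eq_getElem]
  have hK2 : ∀ i j, i < j → j < t + 1 → ∀ x ∈ GsAll.getD i [], ∀ y ∈ GsAll.getD j [],
      x < y := by
    intro i j hij hj x hx y hy
    obtain ⟨j', rfl⟩ : ∃ j', j = j' + 1 := ⟨j - 1, by omega⟩
    have hj't : j' < t := by omega
    simp only [hGsAll, List.getD_cons_succ] at hy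
    have hyY : y ∈ Ypool := (hBYpool j' (hidx j' hj't)).subset ((hLsubB j' hj't).subset hy)
    cases i with
    | zero =>
        simp only [hGsAll, List.getD_cons_zero] at hx
        exact hyszs_cross x (hC1ys.subset (hF1C1.subset hx)) y (hYzs.subset hyY)
    | succ i' =>
        simp only [hGsAll, List.getD_cons_succ] at hx
        have hi't : i' < t := by omega
        have hpw := List.pairwise_iff_get.mp hBsord ⟨i', hidx i' hi't⟩ ⟨j', hidx j' hj't⟩
          (by simp; omega)
        rw [hgetget i' (hidx i' hi't), hgetget j' (hidx j' hj't)] at hpw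
        exact hpw x ((hLsubB i' hi't).subset hx) y ((hLsubB j' hj't).subset hy)
  have hK3 : ∀ i j, i < j → j < t + 1 → ∀ x ∈ GsAll.getD i [], ∀ x' ∈ GsAll.getD i [],
      ∀ y ∈ GsAll.getD j [], ∀ y' ∈ GsAll.getD j [], P x y = P x' y' := by
    intro i j hij hj x hx x' hx' y hy y' hy'
    obtain ⟨j', rfl⟩ : ∃ j', j = j' + 1 := ⟨j - 1, by omega⟩
    have hj't : j' < t := by omega
    simp only [hGsAll, List.getD_cons_succ] at hy hy'
    have hyB : y ∈ Bs.getD j' [] := (hLsubB j' hj't).subset hy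
    have hy'B : y' ∈ Bs.getD j' [] := (hLsubB j' hj't).subset hy'
    have hyY : y ∈ Ypool := (hBYpool j' (hidx j' hj't)).subset hyB
    have hy'Y : y' ∈ Ypool := (hBYpool j' (hidx j' hj't)).subset hy'B
    cases i with
    | zero =>
        simp only [hGsAll, List.getD_cons_zero] at hx hx'
        have hxC : x ∈ C1.toFinset := List.mem_toFinset.mpr (hF1C1.subset hx)
        have hx'C : x' ∈ C1.toFinset := List.mem_toFinset.mpr (hF1C1.subset hx')
        calc P x y = P x y₀ := hYagr x hxC y hyY y₀ hy₀Y
          _ = P x' y₀ := hF1eps x hx x' hx'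
          _ = P x' y' := (hYagr x' hx'C y' hy'Y y₀ hy₀Y).symm
    | succ i' =>
        simp only [hGsAll, List.getD_cons_succ] at hx hx'
        have hi't : i' < t := by omega
        set r := (Bs.getD j' []).headI with hrdef
        have hrB : r ∈ Bs.getD j' [] := headI_mem (hBne j' (hidx j' hj't))
        have hpair := List.pairwise_iff_get.mp hBsagr ⟨i', hidx i' hi't⟩ ⟨j', hidx j' hj't⟩
          (by simp; omega)
        rw [hgetget i' (hidx i' hi't), hgetget j' (hidx j' hj't)] at hpair
        have hxB : x ∈ Bs.getD i' [] := (hLsubB i' hi't).subset hx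
        have hx'B : x' ∈ Bs.getD i' [] := (hLsubB i' hi't).subset hx'
        have hxG : x ∈ GsP.getD i' [] := (hLsubG i' hi't).subset hx
        have hx'G : x' ∈ GsP.getD i' [] := (hLsubG i' hi't).subset hx'
        calc P x y = P x r := hpair x hxB y hyB r hrB
          _ = P x' r := hGsPagr i' j' (by omega) (hidx j' hj't) x hxG x' hx'G
          _ = P x' y' := (hpair x' hx'B y' hy'B r hrB).symm
  have hK4 : F1.getLast hF1ne ≤ t :=
    le_getLast C1 hC1sorted hC1ne _ (hF1C1.subset (List.getLast_mem hF1ne))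
  -- assemble the grouping
  have hsortL : ∀ i, i < t + 1 → (GsAll.getD i []).Pairwise (·<·) := by
    intro i hi
    exact hspl.sorted.sublist (hK1 i hi).2.2
  refine ⟨GsAll.map List.toFinset, ?_, ?_, ?_, ?_⟩
  · -- each group : subset, nonempty, large
    intro F hF
    obtain ⟨G, hGmem, rfl⟩ := List.mem_map.mp hF
    obtain ⟨i, hi, hGi⟩ := List.mem_iff_getElem.mp hGmem
    have hit : i < t + 1 := by rw [← hAlllen]; exact hi
    have hGeq : GsAll.getD i [] = G := by rw [List.getD_eq_getElem _ _ hi]; exact hGi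
    obtain ⟨hne, hLg, hsub⟩ := hK1 i hit
    rw [hGeq] at hne hLg hsub
    refine ⟨toFinset_sub hsub hxsdef, ⟨G.headI, List.mem_toFinset.mpr (headI_mem hne)⟩, ?_⟩
    show (G.toFinset.sort (·≤·)).foldl KSstep [n] = []
    rw [sort_toFinset_eq (hspl.sorted.sublist hsub)]
    exact hLg
  · -- ordering
    intro i j hij hj x hx y hy
    have hlen' : (GsAll.map List.toFinset).length = t + 1 := by simp [hAlllen]
    have hjt : j < t + 1 := by rw [← hlen']; exact hj
    have hit : i < t + 1 := by omega
    have hgd : ∀ k, k < t + 1 → (GsAll.map List.toFinset).getD k ∅ = (GsAll.getD k []).toFinset := by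
      intro k hk
      have hk1 : k < (GsAll.map List.toFinset).length := by omega
      have hk2 : k < GsAll.length := by omega
      rw [List.getD_eq_getElem _ _ hk1, List.getElem_map, List.getD_eq_getElem _ _ hk2]
    rw [hgd i hit] at hx
    rw [hgd j hjt] at hy
    exact hK2 i j hij hjt x (List.mem_toFinset.mp hx) y (List.mem_toFinset.mp hy)
  · -- the maxima form an ω-large set
    have hms : (GsAll.map List.toFinset).map (fun F => F.sup id)
        = GsAll.map (fun G => G.toFinset.sup id) := by
      rw [List.map_map]; rfl
    rw [hms]
    have hmslen : (GsAll.map (fun G => G.toFinset.sup id)).length = t + 1 := by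
      simp [hAlllen]
    have hsup : ∀ k (hk : k < t + 1), (GsAll.getD k []).toFinset.sup id
        = (GsAll.getD k []).getLast ((hK1 k hk).1) := by
      intro k hk
      exact sup_id_toFinset _ (hsortL k hk) _
    have hmsget : ∀ k (hk : k < (GsAll.map (fun G => G.toFinset.sup id)).length),
        (GsAll.map (fun G => G.toFinset.sup id))[k] = (GsAll.getD k []).toFinset.sup id := by
      intro k hk
      have hk2 : k < GsAll.length := by
        rw [hmslen] at hk; omega
      rw [List.getElem_map, List.getD_eq_getElem _ _ hk2]
    have hmspw : (GsAll.map (fun G => G.toFinset.sup id)).Pairwise (·<·) := by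
      rw [List.pairwise_iff_get]
      intro i j hij
      have hit : (i : ℕ) < t + 1 := by have := i.2; omega
      have hjt : (j : ℕ) < t + 1 := by have := j.2; omega
      rw [List.get_eq_getElem, List.get_eq_getElem, hmsget i i.2, hmsget j j.2,
        hsup i hit, hsup j hjt]
      refine hK2 i j (by exact hij) hjt _ (List.getLast_mem _) _ (List.getLast_mem _)
    show ((((GsAll.map (fun G => G.toFinset.sup id))).toFinset.sort (·≤·)).foldl KSstep [1]) = []
    rw [sort_toFinset_eq hmspw]
    have hmseq : GsAll.map (fun G => G.toFinset.sup id)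
        = (F1.toFinset.sup id) :: Fs2.map (fun G => G.toFinset.sup id) := by
      rw [hGsAll, List.map_cons]
    have hm₀ : F1.toFinset.sup id = F1.getLast hF1ne :=
      sup_id_toFinset _ (hspl.sorted.sublist (hF1C1.trans hC1xs)) _
    rw [hmseq]
    show Lg [1] _
    rw [Lg_cons]
    have hK : KSstep [1] (F1.toFinset.sup id) = List.replicate (F1.toFinset.sup id) 0 :=
      KSstep_succ 0 _
    rw [hK]
    show List.foldl KSstep _ _ = []
    rw [foldl_replicate_zero]
    have hlen2 : (Fs2.map (fun G => G.toFinset.sup id)).length = t := by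
      simp [hFs2len, hGsPlen, hBslen]
    rw [hlen2, hm₀]
    simp [Nat.sub_eq_zero_of_le hK4]
  · -- rectangles
    intro i j hij hj x hx x' hx' y hy y' hy'
    have hlen' : (GsAll.map List.toFinset).length = t + 1 := by simp [hAlllen]
    have hjt : j < t + 1 := by rw [← hlen']; exact hj
    have hit : i < t + 1 := by omega
    have hgd : ∀ k, k < t + 1 → (GsAll.map List.toFinset).getD k ∅ = (GsAll.getD k []).toFinset := by
      intro k hk
      have hk1 : k < (GsAll.map List.toFinset).length := by omega
      have hk2 : k < GsAll.length := by omega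
      rw [List.getD_eq_getElem _ _ hk1, List.getElem_map, List.getD_eq_getElem _ _ hk2]
    rw [hgd i hit] at hx hx'
    rw [hgd j hjt] at hy hy'
    exact hK3 i j hij hjt x (List.mem_toFinset.mp hx) x' (List.mem_toFinset.mp hx')
      y (List.mem_toFinset.mp hy) y' (List.mem_toFinset.mp hy')

end KSG


/-- Let `X ⊆ ℕ` be a finite set which is `ω^{n+6}`-large and exp-sparse. Then `X`
admits an `(ω^n, ω)`-grouping: every colouring `P : [X]² → 2` has an
`(ω^n, ω)`-grouping. -/
theorem admitsGrouping_omega (n : ℕ) (X : Finset ℕ)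
    (hX : IsLarge [n + 6] X) (hs : ExpSparse X) :
    AdmitsGrouping [n] [1] X := KSG.main n X hX hs
end

section
/- Let n ≥ 2, let X ⊆ ℕ be a finite set and let P : [X]^2 → n be a colouring. For any m ∈ ℕ, the number of x ∈ X whose h.m.p.h. sequence σ_x has length at most m is at most n^m; that is, |{x ∈ X : |σ_x| ≤ m}| ≤ n^m. -/
/-- `σ` is the hereditarily minimal prehomogeneous (h.m.p.h.) sequence for `x` w.r.t. the
colouring `P` on `X`: `σ(0) = min X`,
`σ(i+1) = min {y ∈ X : y > σ(i) ∧ ∀ j ≤ i, P(σ(j), x) = P(σ(j), y)}`,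
and the construction stops once `σ(i) = x`. -/
def IsHMPH {n : ℕ} (X : Finset ℕ) (P : ℕ → ℕ → Fin n) (x : ℕ) (σ : List ℕ) : Prop :=
  σ ≠ [] ∧
  (σ.getD 0 0 ∈ X ∧ ∀ z ∈ X, σ.getD 0 0 ≤ z) ∧
  σ.getLast? = some x ∧
  (∀ i, i + 1 < σ.length → σ.getD i 0 ≠ x) ∧
  (∀ i, i + 1 < σ.length →
    σ.getD (i + 1) 0 ∈ X ∧ σ.getD i 0 < σ.getD (i + 1) 0 ∧
    (∀ j ≤ i, P (σ.getD j 0) x = P (σ.getD j 0) (σ.getD (i + 1) 0)) ∧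
    ∀ y ∈ X, σ.getD i 0 < y →
      (∀ j ≤ i, P (σ.getD j 0) x = P (σ.getD j 0) y) → σ.getD (i + 1) 0 ≤ y)

/-!
By minimality, `σ_x(i+1)` is the least element of `X` above `σ_x(i)` whose colours towards
`σ_x(0), …, σ_x(i)` are those of `x`. Hence, by induction along the sequence, `σ_x` (and with it
its last entry `x`) is determined by the colour word `P(σ_x(0), x), …, P(σ_x(|σ_x| - 2), x)`.
So sending `x` to its colour word is injective, and when `|σ_x| ≤ m` the word has length `< m`;
there are `∑_{k<m} n^k < n^m` such words when `n ≥ 2`.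
-/

theorem List.ncard_setOf_length_eq (α : Type*) [Fintype α] (k : ℕ) :
    {l : List α | l.length = k}.ncard = Fintype.card α ^ k := by
  rw [← Nat.card_coe_set_eq, ← card_vector, ← Nat.card_eq_fintype_card]
  rfl

theorem List.ncard_setOf_length_lt_lt_pow (α : Type*) [Fintype α] (hα : 2 ≤ Fintype.card α)
    (m : ℕ) : {l : List α | l.length < m}.ncard < Fintype.card α ^ m :=
  calc {l : List α | l.length < m}.ncard
      = (⋃ k ∈ Finset.range m, {l : List α | l.length = k}).ncard := by
        congr 1; ext l; simp
    _ ≤ ∑ k ∈ Finset.range m, {l : List α | l.length = k}.ncard :=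
        Finset.set_ncard_biUnion_le _ _
    _ = ∑ k ∈ Finset.range m, Fintype.card α ^ k := by
        simp only [List.ncard_setOf_length_eq]
    _ < Fintype.card α ^ m := Nat.geomSum_lt hα fun k hk => Finset.mem_range.mp hk

def hmphColours {n : ℕ} (P : ℕ → ℕ → Fin n) (x : ℕ) (σ : List ℕ) : List (Fin n) :=
  (List.range (σ.length - 1)).map fun j => P (σ.getD j 0) x

@[simp]
theorem length_hmphColours {n : ℕ} (P : ℕ → ℕ → Fin n) (x : ℕ) (σ : List ℕ) :
    (hmphColours P x σ).length = σ.length - 1 := by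
  simp [hmphColours]

namespace IsHMPH

variable {n : ℕ} {X : Finset ℕ} {P : ℕ → ℕ → Fin n} {x y : ℕ} {σ τ : List ℕ}

theorem length_pos (h : IsHMPH X P x σ) : 0 < σ.length :=
  List.length_pos_iff.mpr h.1

theorem getD_length_sub_one (h : IsHMPH X P x σ) : σ.getD (σ.length - 1) 0 = x := by
  rw [List.getD_eq_getElem?_getD, ← List.getLast?_eq_getElem?, h.2.2.1, Option.getD_some]

theorem isLeast_getD_zero (h : IsHMPH X P x σ) : IsLeast (X : Set ℕ) (σ.getD 0 0) :=
  h.2.1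

theorem isLeast_getD_succ (h : IsHMPH X P x σ) {i : ℕ} (hi : i + 1 < σ.length) :
    IsLeast {z | z ∈ X ∧ σ.getD i 0 < z ∧ ∀ j ≤ i, P (σ.getD j 0) x = P (σ.getD j 0) z}
      (σ.getD (i + 1) 0) :=
  let ⟨hmem, hlt, hcol, hmin⟩ := h.2.2.2.2 i hi
  ⟨⟨hmem, hlt, hcol⟩, fun z ⟨hz, hzlt, hzcol⟩ => hmin z hz hzlt hzcol⟩

theorem getD_eq_of_colours (hσ : IsHMPH X P x σ) (hτ : IsHMPH X P y τ)
    (hlen : σ.length = τ.length)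
    (hcol : ∀ j, j + 1 < σ.length → P (σ.getD j 0) x = P (τ.getD j 0) y) :
    ∀ i < σ.length, σ.getD i 0 = τ.getD i 0
  | 0, _ => hσ.isLeast_getD_zero.unique hτ.isLeast_getD_zero
  | i + 1, hi => by
    have hprefix : ∀ j ≤ i, σ.getD j 0 = τ.getD j 0 := fun j hj =>
      getD_eq_of_colours hσ hτ hlen hcol j (by omega)
    have hsame : {z | z ∈ X ∧ σ.getD i 0 < z ∧ ∀ j ≤ i, P (σ.getD j 0) x = P (σ.getD j 0) z} =
        {z | z ∈ X ∧ τ.getD i 0 < z ∧ ∀ j ≤ i, P (τ.getD j 0) y = P (τ.getD j 0) z} := by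
      ext z
      refine and_congr_right' (and_congr ?_ (forall₂_congr fun j hj => ?_))
      · rw [hprefix i le_rfl]
      · rw [hcol j (by omega), hprefix j hj]
    exact (hσ.isLeast_getD_succ hi).unique (hsame ▸ hτ.isLeast_getD_succ (hlen ▸ hi))

theorem eq_of_hmphColours_eq (hσ : IsHMPH X P x σ) (hτ : IsHMPH X P y τ)
    (h : hmphColours P x σ = hmphColours P y τ) : x = y := by
  have hlen : σ.length = τ.length := by
    have := congrArg List.length h
    rw [length_hmphColours, length_hmphColours] at this
    have := hσ.length_pos; have := hτ.length_pos
    omega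
  have hcol : ∀ j, j + 1 < σ.length → P (σ.getD j 0) x = P (τ.getD j 0) y := by
    intro j hj
    have := congrArg (·[j]?) h
    simpa [hmphColours, List.getElem?_range, show j < σ.length - 1 by omega,
      show j < τ.length - 1 by omega] using this
  rw [← hσ.getD_length_sub_one, ← hτ.getD_length_sub_one, ← hlen]
  exact getD_eq_of_colours hσ hτ hlen hcol _ (by have := hσ.length_pos; omega)

end IsHMPH

/-- Let `n ≥ 2`, let `X ⊆ ℕ` be a finite set and `P : [X]² → n` a colouring.  For any
`m ∈ ℕ`, the number of `x ∈ X` whose h.m.p.h. sequence `σ_x` has length at most `m`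
is at most `n^m`. -/
theorem card_short_hmph_le (n : ℕ) (hn : 2 ≤ n) (X : Finset ℕ) (P : ℕ → ℕ → Fin n)
    (m : ℕ) :
    Set.ncard {x | x ∈ X ∧ ∃ σ : List ℕ, IsHMPH X P x σ ∧ σ.length ≤ m} ≤ n ^ m := by
  set S := {x | x ∈ X ∧ ∃ σ : List ℕ, IsHMPH X P x σ ∧ σ.length ≤ m}
  choose! σ hσ hσm using fun x (hx : x ∈ S) => hx.2
  have hshort : ∀ x ∈ S, hmphColours P x (σ x) ∈ {l : List (Fin n) | l.length < m} := by
    intro x hx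
    have := (hσ x hx).length_pos
    have := hσm x hx
    rw [Set.mem_ofPred_eq, length_hmphColours]
    omega
  have hinj : Set.InjOn (fun x => hmphColours P x (σ x)) S := fun x hx y hy hxy =>
    (hσ x hx).eq_of_hmphColours_eq (hσ y hy) hxy
  calc S.ncard ≤ {l : List (Fin n) | l.length < m}.ncard :=
        Set.ncard_le_ncard_of_injOn _ hshort hinj (List.finite_length_lt _ m)
    _ ≤ n ^ m := by
        simpa using (List.ncard_setOf_length_lt_lt_pow (Fin n) (by simpa using hn) m).le
end

section
/- Let n ≥ 2, let X ⊆ ℕ be a finite set and let P : [X]^2 → n be a colouring. For any x ∈ X with x ≠ min X and any colour c ∈ col(σ_x), one has min ho(σ_x, c) ≤ σ_x^-(|σ_x^-| − 1), i.e. the minimum of ho(σ_x, c) is at most the last element of σ_x^-. -/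
/-- For a colour `c < n`, `ho(σ_x, c) = {σ_x(i) : i < |σ_x| − 1 ∧ P(σ_x(i), x) = c}`.
(For an initial segment `σ_y` of an h.m.p.h. sequence `σ_x`, the colours
`P(σ_y(i), y)` and `P(σ_y(i), x)` agree for `i < |σ_y| - 1`, so we may use `x`
throughout.) -/
def hmphHo {n : ℕ} (P : ℕ → ℕ → Fin n) (x : ℕ) (σ : List ℕ) (c : Fin n) : Set ℕ :=
  {z | ∃ i, i + 1 < σ.length ∧ σ.getD i 0 = z ∧ P z x = c}

/-- `col(σ_x) = {c < n : ho(σ_x, c) ≠ ∅}`. -/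
def hmphCol {n : ℕ} (P : ℕ → ℕ → Fin n) (x : ℕ) (σ : List ℕ) : Set (Fin n) :=
  {c | (hmphHo P x σ c).Nonempty}

/-!
Let `L = |σ_x⁻|`. The colour `c` already occurs among the first `L` entries of `σ_x`: otherwise
the initial segment of length `L + 1` would still miss `c` and, being longer than `σ_x⁻`, would
contradict its maximality (or it is `σ_x` itself, whose colour `c` then appears before index `L`
anyway). Since `σ_x` is increasing, that entry is at most `σ_x(L - 1)`, the last entry of `σ_x⁻`.
-/

theorem List.IsPrefix.getD_eq {α : Type*} {l₁ l₂ : List α} (h : l₁ <+: l₂) {i : ℕ}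
    (hi : i < l₁.length) (d : α) : l₁.getD i d = l₂.getD i d := by
  rw [List.getD_eq_getElem _ _ hi, List.getD_eq_getElem _ _ (hi.trans_le h.length_le),
    h.getElem hi]

section

variable {n : ℕ} {P : ℕ → ℕ → Fin n} {x : ℕ} {σ τ : List ℕ}

theorem IsHMPH.getD_mono {X : Finset ℕ} (hσ : IsHMPH X P x σ) {i j : ℕ} (hij : i ≤ j)
    (hj : j < σ.length) : σ.getD i 0 ≤ σ.getD j 0 := by
  induction j, hij using Nat.le_induction with
  | base => rfl
  | succ k _ ih => exact (ih (by omega)).trans (hσ.2.2.2.2 k hj).2.1.le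

theorem hmphHo_subset_of_prefix (h : τ <+: σ) (c : Fin n) :
    hmphHo P x τ c ⊆ hmphHo P x σ c := by
  rintro z ⟨i, hi, rfl, hc⟩
  exact ⟨i, hi.trans_le h.length_le, (h.getD_eq (by omega) 0).symm, hc⟩

theorem hmphCol_subset_of_prefix (h : τ <+: σ) : hmphCol P x τ ⊆ hmphCol P x σ :=
  fun c hc => hc.mono (hmphHo_subset_of_prefix h c)

theorem mem_hmphCol_take_succ_of_maximal {c : Fin n} (hc : c ∈ hmphCol P x σ)
    (hτpre : τ <+: σ) (hτne : τ ≠ σ)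
    (hτmax : ∀ τ' : List ℕ, τ' <+: σ → τ' ≠ σ →
      hmphCol P x τ' ⊂ hmphCol P x σ → τ'.length ≤ τ.length) :
    c ∈ hmphCol P x (σ.take (τ.length + 1)) := by
  have hlt : τ.length < σ.length :=
    lt_of_le_of_ne hτpre.length_le fun h => hτne (hτpre.eq_of_length h)
  by_cases hfull : σ.take (τ.length + 1) = σ
  · rwa [hfull]
  · have hcol_eq : hmphCol P x (σ.take (τ.length + 1)) = hmphCol P x σ := by
      by_contra hne
      have := hτmax _ (List.take_prefix _ _) hfull
        ((hmphCol_subset_of_prefix (List.take_prefix _ _)).ssubset_of_ne hne)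
      simp only [List.length_take] at this
      omega
    rwa [hcol_eq]

end

theorem min_ho_le_last_of_hmph_minus_general (n : ℕ) (X : Finset ℕ)
    (P : ℕ → ℕ → Fin n) (x : ℕ)
    (σ : List ℕ) (hσ : IsHMPH X P x σ)
    (c : Fin n) (hc : c ∈ hmphCol P x σ)
    (τ : List ℕ) (hτpre : τ <+: σ) (hτne : τ ≠ σ)
    (hτmax : ∀ τ' : List ℕ, τ' <+: σ → τ' ≠ σ →
      hmphCol P x τ' ⊂ hmphCol P x σ → τ'.length ≤ τ.length) :
    sInf (hmphHo P x σ c) ≤ τ.getD (τ.length - 1) 0 := by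
  have htake := List.take_prefix (τ.length + 1) σ
  obtain ⟨z, i, hi, rfl, hz⟩ := mem_hmphCol_take_succ_of_maximal hc hτpre hτne hτmax
  have hiτ : i < τ.length := by simp only [List.length_take] at hi; omega
  calc sInf (hmphHo P x σ c)
      ≤ (σ.take (τ.length + 1)).getD i 0 :=
        Nat.sInf_le (hmphHo_subset_of_prefix htake c ⟨i, hi, rfl, hz⟩)
    _ = σ.getD i 0 := htake.getD_eq (by omega) 0
    _ ≤ σ.getD (τ.length - 1) 0 :=
        hσ.getD_mono (by omega) (by have := hτpre.length_le; omega)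
    _ = τ.getD (τ.length - 1) 0 := (hτpre.getD_eq (by omega) 0).symm

/-- Let `n ≥ 2`, `X ⊆ ℕ` finite, `P : [X]² → n` a colouring.  For any `x ∈ X` with
`x ≠ min X` and any colour `c ∈ col(σ_x)`, one has
`min ho(σ_x, c) ≤ σ_x⁻(|σ_x⁻| − 1)`, where `σ_x⁻` (here `τ`) is the longest initial
segment of `σ_x` with `col(τ) ⊊ col(σ_x)`. -/
theorem min_ho_le_last_of_hmph_minus (n : ℕ) (hn : 2 ≤ n) (X : Finset ℕ)
    (P : ℕ → ℕ → Fin n) (x : ℕ) (hx : x ∈ X) (hxmin : ∃ z ∈ X, z < x)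
    (σ : List ℕ) (hσ : IsHMPH X P x σ)
    (c : Fin n) (hc : c ∈ hmphCol P x σ)
    (τ : List ℕ) (hτpre : τ <+: σ) (hτne : τ ≠ σ)
    (hτcol : hmphCol P x τ ⊂ hmphCol P x σ)
    (hτmax : ∀ τ' : List ℕ, τ' <+: σ → τ' ≠ σ →
      hmphCol P x τ' ⊂ hmphCol P x σ → τ'.length ≤ τ.length) :
    sInf (hmphHo P x σ c) ≤ τ.getD (τ.length - 1) 0 :=
  min_ho_le_last_of_hmph_minus_general n X P x σ hσ c hc τ hτpre hτne hτmax
end
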